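/- arXiv:2310.01213 — 11 statements merged into one kernel-verified Lean document; each statement's English description precedes it below -/
import Mathlib

section
/- Let f(x) = x + Σ_{k≥2} a_k x^k be a power series with non-negative real coefficients, positive radius of convergence, and let R ∈ (0,1) satisfy f(R) = 1. Then for every complex z with |z| ≤ R and z ≠ R, we have f(z) ≠ 1. -/
/-!
Comparing real parts term by term, `Re ∑ aₖ zᵏ ≤ ∑ aₖ |z|ᵏ ≤ ∑ aₖ Rᵏ = 1` for `|z| ≤ R`, and the
linear term makes the first inequality strict unless `Re z = R`; together with `|z| ≤ R` this
forces `z = R`.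
-/

namespace Complex

theorem eq_ofReal_of_norm_le_of_le_re {z : ℂ} {R : ℝ} (hz : ‖z‖ ≤ R) (hR : R ≤ z.re) :
    z = R := by
  have hre : z.re = R := le_antisymm ((re_le_norm z).trans hz) hR
  have him : z.im = 0 :=
    ((nonneg_iff.mp (re_eq_norm.mp (le_antisymm (re_le_norm z) (hz.trans hR)))).2).symm
  exact ext hre him

section PowerSeries

variable {a : ℕ → ℝ} {R : ℝ} {z : ℂ}

theorem summable_ofReal_mul_pow_of_norm_le (ha : ∀ k, 0 ≤ a k)
    (hsum : Summable fun k => a k * R ^ k) (hz : ‖z‖ ≤ R) :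
    Summable fun k => (a k : ℂ) * z ^ k := by
  refine Summable.of_norm (hsum.of_nonneg_of_le (fun k => norm_nonneg _) fun k => ?_)
  rw [norm_mul, norm_real, Real.norm_of_nonneg (ha k), norm_pow]
  exact mul_le_mul_of_nonneg_left (pow_le_pow_left₀ (norm_nonneg z) hz k) (ha k)

theorem re_tsum_ofReal_mul_pow_lt (ha : ∀ k, 0 ≤ a k) (ha₁ : 0 < a 1)
    (hsum : Summable fun k => a k * R ^ k) (hz : ‖z‖ ≤ R) (hre : z.re < R) :
    (∑' k, (a k : ℂ) * z ^ k).re < ∑' k, a k * R ^ k := by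
  have hsumC := summable_ofReal_mul_pow_of_norm_le ha hsum hz
  have hterm : ∀ k, ((a k : ℂ) * z ^ k).re = a k * (z ^ k).re := fun k => re_ofReal_mul _ _
  have hle : ∀ k, a k * (z ^ k).re ≤ a k * R ^ k := fun k =>
    mul_le_mul_of_nonneg_left ((re_le_norm _).trans
      ((norm_pow z k).le.trans (pow_le_pow_left₀ (norm_nonneg z) hz k))) (ha k)
  have hlt₁ : a 1 * (z ^ 1).re < a 1 * R ^ 1 := by
    simpa only [pow_one] using mul_lt_mul_of_pos_left hre ha₁
  rw [re_tsum hsumC]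
  simp only [hterm]
  exact Summable.tsum_lt_tsum hle hlt₁ ((hasSum_re hsumC.hasSum).summable.congr hterm) hsum

theorem eq_ofReal_of_tsum_ofReal_mul_pow_eq (ha : ∀ k, 0 ≤ a k) (ha₁ : 0 < a 1)
    (hsum : Summable fun k => a k * R ^ k) (hz : ‖z‖ ≤ R)
    (heq : ∑' k, (a k : ℂ) * z ^ k = ∑' k, a k * R ^ k) : z = R := by
  refine eq_ofReal_of_norm_le_of_le_re hz (not_lt.mp fun hre => ?_)
  have hlt := re_tsum_ofReal_mul_pow_lt ha ha₁ hsum hz hre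
  rw [heq, ofReal_re] at hlt
  exact hlt.false

end PowerSeries

end Complex

theorem stmt_1_general (a : ℕ → ℝ) (R : ℝ)
    (h0 : a 0 = 0) (h1 : a 1 = 1)
    (hnn : ∀ k, 2 ≤ k → 0 ≤ a k)
    (hsum : Summable (fun k : ℕ => a k * R ^ k))
    (hroot : ∑' k : ℕ, a k * R ^ k = 1) :
    ∀ z : ℂ, ‖z‖ ≤ R → z ≠ (R : ℂ) →
      ∑' k : ℕ, (a k : ℂ) * z ^ k ≠ 1 := by
  intro z hz hzR hf
  have ha : ∀ k, 0 ≤ a k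
    | 0 => h0.ge
    | 1 => h1 ▸ zero_le_one
    | k + 2 => hnn (k + 2) (Nat.le_add_left 2 k)
  refine hzR (Complex.eq_ofReal_of_tsum_ofReal_mul_pow_eq ha (h1 ▸ one_pos) hsum hz ?_)
  rw [hf, hroot, Complex.ofReal_one]

/-- **Little Narcissus Lemma, part 3.**
Let `f(x) = x + ∑_{k≥2} a_k x^k` be a power series with non-negative real
coefficients, converging (absolutely) at `R`, where `R ∈ (0,1)` satisfies
`f(R) = 1`. Then for every complex `z` with `|z| ≤ R` and `z ≠ R` we have
`f(z) ≠ 1`. -/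
theorem stmt_1 (a : ℕ → ℝ) (R : ℝ)
    (h0 : a 0 = 0) (h1 : a 1 = 1)
    (hnn : ∀ k, 2 ≤ k → 0 ≤ a k)
    (hR : R ∈ Set.Ioo (0:ℝ) 1)
    (hsum : Summable (fun k : ℕ => a k * R ^ k))
    (hroot : ∑' k : ℕ, a k * R ^ k = 1) :
    ∀ z : ℂ, ‖z‖ ≤ R → z ≠ (R : ℂ) →
      ∑' k : ℕ, (a k : ℂ) * z ^ k ≠ 1 :=
  stmt_1_general a R h0 h1 hnn hsum hroot
end

section
/- For every real q > 0, the equation Σ_{i=0}^∞ x^{1+i+⌊i/q⌋} = 1 has a unique solution ρ_q in the interval (0,1), and this ρ_q is strictly decreasing as a function of q. -/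
/-!
`f_q` is continuous and strictly increasing on `[0, 1)`, vanishes at `0`, and its first two terms
`x + x ^ (2 + ⌊1/q⌋)` already tend to `2` as `x → 1`; the intermediate value theorem and
injectivity give the unique root `ρ_q`. Raising `q` lowers every exponent `⌊i/q⌋`, and strictly
lowers it once `i ≥ q₁ q₂ / (q₂ - q₁)`, so `f_{q₁} < f_{q₂}` on `(0, 1)` and the root moves left.
-/

open Set Filter Topology

lemma exists_floor_div_lt_floor_div {q₁ q₂ : ℝ} (hq₁ : 0 < q₁) (hq : q₁ < q₂) :
    ∃ i : ℕ, ⌊(i : ℝ) / q₂⌋₊ < ⌊(i : ℝ) / q₁⌋₊ := by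
  obtain ⟨i, hi⟩ := exists_nat_ge (q₁ * q₂ / (q₂ - q₁))
  have hq₂ : 0 < q₂ := hq₁.trans hq
  have hgap : (i : ℝ) / q₂ + 1 ≤ i / q₁ := by
    rw [div_le_iff₀ (sub_pos.2 hq)] at hi
    rw [div_add_one hq₂.ne', div_le_div_iff₀ hq₂ hq₁]
    nlinarith
  refine ⟨i, ?_⟩
  simpa [Nat.floor_add_one (by positivity : (0 : ℝ) ≤ i / q₂)] using Nat.floor_mono hgap

noncomputable def floorSeries (q x : ℝ) : ℝ := ∑' i : ℕ, x ^ (1 + i + ⌊(i : ℝ) / q⌋₊)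

namespace floorSeries

variable {q x : ℝ}

lemma summable (hx0 : 0 ≤ x) (hx1 : x < 1) :
    Summable fun i : ℕ => x ^ (1 + i + ⌊(i : ℝ) / q⌋₊) :=
  (summable_geometric_of_lt_one hx0 hx1).of_nonneg_of_le (fun _ => pow_nonneg hx0 _)
    fun _ => pow_le_pow_of_le_one hx0 hx1.le (by omega)

lemma apply_zero (q : ℝ) : floorSeries q 0 = 0 := by
  simp [floorSeries]

lemma strictMonoOn (q : ℝ) : StrictMonoOn (floorSeries q) (Ico 0 1) := by
  intro a ⟨ha0, _⟩ b ⟨_, hb1⟩ hab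
  refine Summable.tsum_lt_tsum (i := 0) (fun _ => pow_le_pow_left₀ ha0 hab.le _) ?_
    (summable ha0 (hab.trans hb1)) (summable (ha0.trans hab.le) hb1)
  simpa using hab

lemma continuousOn_Icc {r : ℝ} (hr0 : 0 ≤ r) (hr1 : r < 1) :
    ContinuousOn (floorSeries q) (Icc 0 r) := by
  refine continuousOn_tsum (fun _ => (continuous_pow _).continuousOn)
    (summable_geometric_of_lt_one hr0 hr1) fun n x ⟨hx0, hxr⟩ => ?_
  rw [Real.norm_of_nonneg (pow_nonneg hx0 _)]
  calc x ^ (1 + n + ⌊(n : ℝ) / q⌋₊) ≤ x ^ n :=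
        pow_le_pow_of_le_one hx0 (hxr.trans hr1.le) (by omega)
    _ ≤ r ^ n := pow_le_pow_left₀ hx0 hxr n

lemma exists_one_le (q : ℝ) : ∃ x ∈ Ioo (0 : ℝ) 1, 1 ≤ floorSeries q x := by
  set E := 1 + 1 + ⌊(1 : ℝ) / q⌋₊
  have hlim : Tendsto (fun x : ℝ => x + x ^ E) (𝓝[<] 1) (𝓝 2) :=
    ((continuous_id.add (continuous_pow E)).tendsto' 1 2 (by norm_num)).mono_left
      nhdsWithin_le_nhds
  obtain ⟨x, hx2, hx⟩ :=
    ((hlim.eventually (lt_mem_nhds one_lt_two)).and (Ioo_mem_nhdsLT zero_lt_one)).exists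
  refine ⟨x, hx, le_trans ?_ ((summable hx.1.le hx.2).sum_le_tsum (Finset.range 2)
    fun i _ => pow_nonneg hx.1.le _)⟩
  simpa [Finset.sum_range_succ, E] using hx2.le

lemma existsUnique_eq_one (q : ℝ) : ∃! ρ, ρ ∈ Ioo (0 : ℝ) 1 ∧ floorSeries q ρ = 1 := by
  obtain ⟨x, ⟨hx0, hx1⟩, hfx⟩ := exists_one_le q
  obtain ⟨ρ, ⟨hρ0, hρx⟩, hρ⟩ := intermediate_value_Icc hx0.le (continuousOn_Icc hx0.le hx1)
    ⟨(apply_zero q).le.trans zero_le_one, hfx⟩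
  have hρ0 : 0 < ρ := hρ0.lt_of_ne <| by rintro rfl; simp [apply_zero] at hρ
  refine ⟨ρ, ⟨⟨hρ0, hρx.trans_lt hx1⟩, hρ⟩, fun y ⟨hy, hfy⟩ => ?_⟩
  exact (strictMonoOn q).injOn (Ioo_subset_Ico_self hy) ⟨hρ0.le, hρx.trans_lt hx1⟩
    (hfy.trans hρ.symm)

lemma strictMonoOn_param (hx0 : 0 < x) (hx1 : x < 1) :
    StrictMonoOn (floorSeries · x) (Ioi 0) := by
  intro q₁ hq₁ q₂ _ hq
  obtain ⟨i, hi⟩ := exists_floor_div_lt_floor_div hq₁ hq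
  have hfloor (j : ℕ) : ⌊(j : ℝ) / q₂⌋₊ ≤ ⌊(j : ℝ) / q₁⌋₊ :=
    Nat.floor_mono (div_le_div_of_nonneg_left j.cast_nonneg hq₁ hq.le)
  refine Summable.tsum_lt_tsum (i := i) (fun j => ?_) ?_ (summable hx0.le hx1)
    (summable hx0.le hx1)
  · exact pow_le_pow_of_le_one hx0.le hx1.le (by have := hfloor j; omega)
  · exact pow_lt_pow_right_of_lt_one₀ hx0 hx1 (by omega)

end floorSeries

/-- For every real `q > 0`, the equation `∑_{i=0}^∞ x^(1+i+⌊i/q⌋) = 1` has a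
unique solution `ρ_q` in `(0,1)`, and this solution is strictly decreasing as
a function of `q`. -/
theorem stmt_3 :
    (∀ q : ℝ, 0 < q →
      ∃! ρ : ℝ, ρ ∈ Set.Ioo (0:ℝ) 1 ∧
        (∑' i : ℕ, ρ ^ (1 + i + ⌊(i : ℝ) / q⌋₊)) = 1) ∧
    (∀ q₁ q₂ : ℝ, 0 < q₁ → q₁ < q₂ → ∀ ρ₁ ρ₂ : ℝ,
      (ρ₁ ∈ Set.Ioo (0:ℝ) 1 ∧ (∑' i : ℕ, ρ₁ ^ (1 + i + ⌊(i : ℝ) / q₁⌋₊)) = 1) →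
      (ρ₂ ∈ Set.Ioo (0:ℝ) 1 ∧ (∑' i : ℕ, ρ₂ ^ (1 + i + ⌊(i : ℝ) / q₂⌋₊)) = 1) →
      ρ₂ < ρ₁) := by
  refine ⟨fun q _ => floorSeries.existsUnique_eq_one q, ?_⟩
  rintro q₁ q₂ hq₁ hq ρ₁ ρ₂ ⟨hρ₁, hf₁⟩ ⟨hρ₂, hf₂⟩
  change floorSeries q₁ ρ₁ = 1 at hf₁
  change floorSeries q₂ ρ₂ = 1 at hf₂
  by_contra! hle
  have raise_q := floorSeries.strictMonoOn_param hρ₁.1 hρ₁.2 hq₁ (hq₁.trans hq) hq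
  have raise_x := (floorSeries.strictMonoOn q₂).monotoneOn (Ioo_subset_Ico_self hρ₁)
    (Ioo_subset_Ico_self hρ₂) hle
  linarith
end

section
/- A binary word w is q-decreasing (every maximal factor 0^a 1^b with a>0 satisfies q·a > b) if and only if w can be written as a concatenation 1^m · s_1 · s_2 ⋯ s_k, where m ≥ 0 and each s_j is of the form 0^{1+⌊i/q⌋} 1^i for some i ≥ 0. -/
/-- A binary word (`true` = 1, `false` = 0) is `q`-decreasing if every
length-maximal occurrence of a factor `0^a 1^b` with `a > 0` (i.e. not
preceded by a `0` and not followed by a `1`) satisfies `q·a > b`. -/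
def QDecreasing (q : ℝ) (w : List Bool) : Prop :=
  ∀ u v : List Bool, ∀ a b : ℕ, 0 < a →
    w = u ++ (List.replicate a false ++ List.replicate b true) ++ v →
    u.getLast? ≠ some false → v.head? ≠ some true →
    q * a > b

/-!
Cutting a word between a `1` and a following `0` splits its maximal factors `0^a 1^b` between
the two pieces, since a sorted word `0^a 1^b` contains no factor `10`. So a word is
`q`-decreasing iff every block of its decomposition `1^m · 0^{a₁} 1^{b₁} ⋯` into maximal
runs is, i.e. iff `q a > b`, i.e. `a ≥ 1 + ⌊b / q⌋`, for every block. Such a block is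
`0^{a - 1 - ⌊b/q⌋} · s_b = s_0^{a - 1 - ⌊b/q⌋} · s_b`.
-/

open List

theorem List.getLast?_ne_some_of_append {α : Type*} {s t : List α} {c : α}
    (h : (s ++ t).getLast? ≠ some c) : t.getLast? ≠ some c := by
  cases t using List.reverseRecOn <;> simp_all

theorem List.head?_ne_some_of_append {α : Type*} {s t : List α} {c : α}
    (h : (s ++ t).head? ≠ some c) : s.head? ≠ some c := by
  cases s <;> simp_all

theorem exists_eq_replicate_append_head?_ne {α : Type*} [DecidableEq α] (c : α) :
    ∀ w : List α, ∃ n w', w = replicate n c ++ w' ∧ w'.head? ≠ some c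
  | [] => ⟨0, [], rfl, by simp⟩
  | d :: w =>
    if hd : d = c then
      have ⟨n, w', hw, hw'⟩ := exists_eq_replicate_append_head?_ne c w
      ⟨n + 1, w', by simp [hd, hw, replicate_succ], hw'⟩
    else ⟨0, d :: w, rfl, by simp [hd]⟩

theorem eq_nil_or_eq_nil_of_replicate_append_replicate_eq {a b : ℕ} {x y : List Bool}
    (h : replicate a false ++ replicate b true = x ++ y)
    (hx : x.getLast? ≠ some false) (hy : y.head? ≠ some true) : x = [] ∨ y = [] := by
  have hsorted : (x ++ y).Pairwise (· ≤ ·) := by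
    rw [← h, pairwise_append]
    simp [pairwise_replicate]
  by_contra! hne
  have hxl : x.getLast? = some true := by
    cases hc : x.getLast? with
    | none => simp_all
    | some c => cases c <;> simp_all
  have hyh : y.head? = some false := by
    cases hc : y.head? with
    | none => simp_all
    | some c => cases c <;> simp_all
  exact absurd ((pairwise_append.1 hsorted).2.2 _ (mem_of_getLast? hxl) _ (mem_of_head? hyh))
    (by decide)

def HasMaximalFactor (w : List Bool) (a b : ℕ) : Prop :=
  ∃ u v : List Bool, w = u ++ (replicate a false ++ replicate b true) ++ v ∧
    u.getLast? ≠ some false ∧ v.head? ≠ some true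

theorem qDecreasing_iff {q : ℝ} {w : List Bool} :
    QDecreasing q w ↔ ∀ a b, 0 < a → HasMaximalFactor w a b → (b : ℝ) < q * a :=
  ⟨fun h _ _ ha ⟨u, v, hw, hu, hv⟩ => h u v _ _ ha hw hu hv,
    fun h _ _ _ _ ha hw hu hv => h _ _ ha ⟨_, _, hw, hu, hv⟩⟩

theorem hasMaximalFactor_append_iff {x y : List Bool} {a b : ℕ}
    (hx : x.getLast? ≠ some false) (hy : y.head? ≠ some true) :
    HasMaximalFactor (x ++ y) a b ↔ HasMaximalFactor x a b ∨ HasMaximalFactor y a b := by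
  constructor
  · rintro ⟨u, v, h, hu, hv⟩
    rw [append_assoc, append_eq_append_iff] at h
    rcases h with ⟨s, rfl, rfl⟩ | ⟨c, rfl, hc⟩
    · exact .inr ⟨s, v, by simp, getLast?_ne_some_of_append hu, hv⟩
    rw [append_eq_append_iff] at hc
    rcases hc with ⟨d, rfl, rfl⟩ | ⟨e, hB, rfl⟩
    · exact .inl ⟨u, d, by simp, hu, head?_ne_some_of_append hv⟩
    rcases eq_nil_or_eq_nil_of_replicate_append_replicate_eq hB
      (getLast?_ne_some_of_append hx) (head?_ne_some_of_append hy) with rfl | rfl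
    · exact .inr ⟨[], v, by simp [hB], by simp, hv⟩
    · exact .inl ⟨u, [], by simp [hB], hu, by simp⟩
  · rintro (⟨u, v, rfl, hu, hv⟩ | ⟨u, v, rfl, hu, hv⟩)
    · refine ⟨u, v ++ y, by simp, hu, ?_⟩
      cases v <;> simp_all
    · refine ⟨x ++ u, v, by simp, ?_, hv⟩
      cases u using List.reverseRecOn <;> simp_all

theorem qDecreasing_append_iff {q : ℝ} {x y : List Bool}
    (hx : x.getLast? ≠ some false) (hy : y.head? ≠ some true) :
    QDecreasing q (x ++ y) ↔ QDecreasing q x ∧ QDecreasing q y := by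
  simp only [qDecreasing_iff, hasMaximalFactor_append_iff hx hy, or_imp, forall_and]

theorem qDecreasing_replicate_true (q : ℝ) (m : ℕ) : QDecreasing q (replicate m true) := by
  intro u v a b ha h
  have : false ∈ replicate m true := by simp [h, ha.ne']
  simp at this

theorem getLast?_replicate_true_ne (m : ℕ) : (replicate m true).getLast? ≠ some false := by
  simp [getLast?_replicate]

theorem qDecreasing_replicate_append_replicate_iff {q : ℝ} (hq : 0 < q) {a b : ℕ} (ha : 0 < a) :
    QDecreasing q (replicate a false ++ replicate b true) ↔ (b : ℝ) < q * a := by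
  refine ⟨fun h => h [] [] a b ha (by simp) (by simp) (by simp), fun hab => ?_⟩
  intro u v a' b' ha' hw hu hv
  rcases Nat.eq_zero_or_pos b' with rfl | hb'
  -- a run of zeros followed by a zero also counts as a maximal factor when `b' = 0`
  · simpa using mul_pos hq (Nat.cast_pos.2 ha')
  have hu0 : u = [] := by
    rw [append_assoc] at hw
    refine (eq_nil_or_eq_nil_of_replicate_append_replicate_eq hw hu ?_).resolve_right
      (by simp [ha'.ne'])
    cases a' <;> simp_all [replicate_succ]
  subst hu0
  have hv0 : v = [] := by
    rw [nil_append] at hw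
    refine (eq_nil_or_eq_nil_of_replicate_append_replicate_eq hw ?_ hv).resolve_left
      (by simp [ha'.ne'])
    simp [getLast?_append, getLast?_replicate, hb'.ne']
  subst hv0
  have hzeros := congrArg (count false) hw
  have hones := congrArg (count true) hw
  simp [count_replicate] at hzeros hones
  subst hzeros hones
  exact hab

theorem Nat.floor_div_lt_iff {q : ℝ} (hq : 0 < q) (a b : ℕ) :
    ⌊(b : ℝ) / q⌋₊ < a ↔ (b : ℝ) < q * a := by
  rw [Nat.floor_lt (by positivity), div_lt_iff₀ hq, mul_comm]

/-- The word `s_i` of the decomposition. -/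
noncomputable def qSegment (q : ℝ) (i : ℕ) : List Bool :=
  replicate (1 + ⌊(i : ℝ) / q⌋₊) false ++ replicate i true

theorem qSegment_zero (q : ℝ) : qSegment q 0 = [false] := by
  simp [qSegment]

theorem head?_flatten_map_qSegment_ne (q : ℝ) (L : List ℕ) :
    ((L.map (qSegment q)).flatten).head? ≠ some true := by
  cases L <;> simp [qSegment, add_comm 1, replicate_succ]

theorem flatten_map_qSegment_replicate_zero (q : ℝ) (k : ℕ) :
    ((replicate k 0).map (qSegment q)).flatten = replicate k false := by
  simp [qSegment_zero]

theorem qDecreasing_replicate_false_append_flatten {q : ℝ} (hq : 0 < q) (L : List ℕ) (k : ℕ) :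
    QDecreasing q (replicate k false ++ (L.map (qSegment q)).flatten) := by
  induction L generalizing k with
  | nil =>
    rcases Nat.eq_zero_or_pos k with rfl | hk
    · simpa using qDecreasing_replicate_true q 0
    · simpa using (qDecreasing_replicate_append_replicate_iff hq hk (b := 0)).2
        (by rw [Nat.cast_zero]; positivity)
  | cons i L ih =>
    rcases Nat.eq_zero_or_pos i with rfl | hi
    · simpa [qSegment_zero, replicate_succ'] using ih (k + 1)
    have hw : replicate k false ++ ((i :: L).map (qSegment q)).flatten =
        (replicate (k + 1 + ⌊(i : ℝ) / q⌋₊) false ++ replicate i true) ++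
          (L.map (qSegment q)).flatten := by
      simp [qSegment, replicate_add, add_assoc]
    rw [hw, qDecreasing_append_iff (by simp [getLast?_append, getLast?_replicate, hi.ne'])
      (head?_flatten_map_qSegment_ne q L),
      qDecreasing_replicate_append_replicate_iff hq (by omega), ← Nat.floor_div_lt_iff hq]
    exact ⟨by omega, by simpa using ih 0⟩

theorem exists_flatten_map_qSegment {q : ℝ} (hq : 0 < q) {w : List Bool}
    (hQ : QDecreasing q w) (hw : w.head? ≠ some true) :
    ∃ L : List ℕ, w = (L.map (qSegment q)).flatten := by
  obtain ⟨a, x, hax, hx⟩ := exists_eq_replicate_append_head?_ne false w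
  rcases Nat.eq_zero_or_pos a with rfl | ha
  · refine ⟨[], ?_⟩
    rw [hax, replicate_zero, nil_append]
    cases x with
    | nil => rfl
    | cons c x => cases c <;> simp_all
  obtain ⟨b, y, rfl, hy⟩ := exists_eq_replicate_append_head?_ne true x
  have hsplit : QDecreasing q (replicate a false ++ replicate b true) ∧ QDecreasing q y := by
    rw [← append_assoc] at hax
    rcases Nat.eq_zero_or_pos b with rfl | hb
    · obtain rfl : y = [] := by
        cases y with
        | nil => rfl
        | cons c y => cases c <;> simp_all
      exact ⟨by simpa [hax] using hQ, by simpa using qDecreasing_replicate_true q 0⟩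
    · rwa [hax, qDecreasing_append_iff (by simp [getLast?_append, getLast?_replicate, hb.ne']) hy]
        at hQ
  have hlen : y.length < w.length := by simp [hax]; omega
  obtain ⟨L, rfl⟩ := exists_flatten_map_qSegment hq hsplit.2 hy
  have hab := (Nat.floor_div_lt_iff hq a b).2
    ((qDecreasing_replicate_append_replicate_iff hq ha).1 hsplit.1)
  refine ⟨replicate (a - (1 + ⌊(b : ℝ) / q⌋₊)) 0 ++ b :: L, ?_⟩
  rw [hax]
  simp only [map_append, flatten_append, flatten_map_qSegment_replicate_zero, map_cons,
    flatten_cons, qSegment, ← append_assoc, ← replicate_add]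
  congr 3
  omega
termination_by w.length

/-- A word `w` is `q`-decreasing iff `w = 1^m · s_1 · s_2 ⋯ s_k` where each
`s_j` is of the form `0^(1+⌊i/q⌋) 1^i` for some `i ≥ 0`. -/
theorem stmt_4 (q : ℝ) (hq : 0 < q) (w : List Bool) :
    QDecreasing q w ↔
      ∃ (m : ℕ) (L : List ℕ),
        w = List.replicate m true ++
          (L.map (fun (i : ℕ) =>
            List.replicate (1 + ⌊(i : ℝ) / q⌋₊) false ++
              List.replicate i true)).flatten := by
  change QDecreasing q w ↔
    ∃ (m : ℕ) (L : List ℕ), w = replicate m true ++ (L.map (qSegment q)).flatten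
  constructor
  · intro hQ
    obtain ⟨m, x, rfl, hx⟩ := exists_eq_replicate_append_head?_ne true w
    rw [qDecreasing_append_iff (getLast?_replicate_true_ne m) hx] at hQ
    obtain ⟨L, rfl⟩ := exists_flatten_map_qSegment hq hQ.2 hx
    exact ⟨m, L, rfl⟩
  · rintro ⟨m, L, rfl⟩
    rw [qDecreasing_append_iff (getLast?_replicate_true_ne m) (head?_flatten_map_qSegment_ne q L)]
    exact ⟨qDecreasing_replicate_true q m,
      by simpa using qDecreasing_replicate_false_append_flatten hq L 0⟩
end

section
/- For every positive integer k, the number of k-decreasing binary words of length n equals the number of binary words of length n avoiding k+1 consecutive 1s. -/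
/-!
Both counting functions satisfy the recurrence `IsGenFibonacci`, which determines a sequence
uniquely. For words avoiding `1^(k+1)` this is the classical count by the leading run of ones.
For `k`-decreasing words the key fact is that `0^a 1 w` is `k`-decreasing iff `w` is and `w` does
not start with `1^(k a - 1)`. Peeling off letters one at a time, this gives, for the number `D m`
of `k`-decreasing words of length `m`,
`D m + D (m - (k + 1)) + D (m - 2 (k + 1)) + ⋯ = 1 + D 0 + ⋯ + D (m - 1)`,
which is the same recurrence in disguise.
-/

open List

namespace List

theorem exists_eq_replicate_append {α : Type*} (c : α) (w : List α) :
    ∃ j x, w = replicate j c ++ x ∧ x.head? ≠ some c := by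
  induction w with
  | nil => exact ⟨0, [], rfl, by simp⟩
  | cons d w ih =>
    by_cases hd : d = c
    · obtain ⟨j, x, rfl, hx⟩ := ih
      exact ⟨j + 1, x, by simp [hd, replicate_succ], hx⟩
    · exact ⟨0, d :: w, rfl, by simpa using hd⟩

theorem replicate_append_inj {α : Type*} {c : α} {a a' : ℕ} {x y : List α}
    (h : replicate a c ++ x = replicate a' c ++ y)
    (hx : x.head? ≠ some c) (hy : y.head? ≠ some c) : a = a' ∧ x = y := by
  induction a generalizing a' with
  | zero =>
    cases a' with
    | zero => simpa using h
    | succ a' => simp [replicate_succ] at h; simp [h] at hx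
  | succ a ih =>
    cases a' with
    | zero => simp [replicate_succ] at h; simp [← h] at hy
    | succ a' =>
      simp only [replicate_succ, cons_append, cons.injEq, true_and] at h
      simpa using ih h

theorem replicate_prefix_replicate_append_iff {α : Type*} {c : α} {m j : ℕ} {x : List α}
    (hx : x.head? ≠ some c) : replicate m c <+: replicate j c ++ x ↔ m ≤ j := by
  refine ⟨fun h => ?_, fun h => (prefix_replicate_iff.2 (by simpa)).trans (prefix_append _ _)⟩
  by_contra! hjm
  rw [show m = j + (m - j) by omega, replicate_add, prefix_append_right_inj] at h
  obtain ⟨t, rfl⟩ := h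
  obtain ⟨i, hi⟩ : ∃ i, m - j = i + 1 := ⟨m - j - 1, by omega⟩
  simp [hi, replicate_succ] at hx

theorem eq_or_exists_of_replicate_append_eq {a b a' b' : ℕ} {u v x : List Bool}
    (hb : 0 < b) (ha' : 0 < a') (hb' : 0 < b')
    (hx : x.head? ≠ some true) (hu : u.getLast? ≠ some false) (hv : v.head? ≠ some true)
    (h : replicate a false ++ replicate b true ++ x =
      u ++ (replicate a' false ++ replicate b' true) ++ v) :
    (a' = a ∧ b' = b) ∨ ∃ u₀, u = replicate a false ++ replicate b true ++ u₀ ∧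
      x = u₀ ++ (replicate a' false ++ replicate b' true) ++ v := by
  rw [append_assoc u] at h
  rcases append_eq_append_iff.1 h with ⟨t, rfl, rfl⟩ | ⟨t, hP, ht⟩
  · exact .inr ⟨t, rfl, (append_assoc _ _ _).symm⟩
  rcases eq_or_ne t [] with rfl | ht₀
  · exact .inr ⟨[], by simpa using hP.symm, by simpa using ht.symm⟩
  have hhead : t.head? = some false := by
    obtain ⟨a'', rfl⟩ : ∃ a'', a' = a'' + 1 := ⟨a' - 1, by omega⟩
    simpa [replicate_succ, head?_append, head?_eq_none_iff.not.2 ht₀] using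
      congrArg head? ht.symm
  rcases append_eq_append_iff.1 hP with ⟨s, rfl, hs⟩ | ⟨s, hs, rfl⟩
  · obtain ⟨l, hl⟩ : ∃ l, t.length = l + 1 :=
      ⟨t.length - 1, by have := length_pos_iff.2 ht₀; omega⟩
    rw [(append_eq_replicate_iff.1 hs.symm).2.2, hl] at hhead
    simp [replicate_succ] at hhead
  · have hu₀ : u = [] := by
      by_contra hne
      obtain ⟨l, hl⟩ : ∃ l, u.length = l + 1 :=
        ⟨u.length - 1, by have := length_pos_iff.2 hne; omega⟩
      rw [(append_eq_replicate_iff.1 hs.symm).2.1, hl] at hu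
      simp [replicate_succ'] at hu
    subst hu₀
    rw [nil_append] at hs
    subst hs
    have hb₁ : (replicate b true ++ x).head? ≠ some false := by
      obtain ⟨b₀, rfl⟩ : ∃ b₀, b = b₀ + 1 := ⟨b - 1, by omega⟩
      simp [replicate_succ]
    have hb₂ : (replicate b' true ++ v).head? ≠ some false := by
      obtain ⟨b₀, rfl⟩ : ∃ b₀, b' = b₀ + 1 := ⟨b' - 1, by omega⟩
      simp [replicate_succ]
    simp only [append_assoc] at ht
    obtain ⟨rfl, ht'⟩ := replicate_append_inj ht hb₂ hb₁
    exact .inl ⟨rfl, (replicate_append_inj ht' hv hx).1⟩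

end List

namespace QDecreasing

variable {q : ℝ} {w x : List Bool}

theorem nil : QDecreasing q [] := by
  intro u v a b ha h _ _
  have := congrArg length h
  simp at this
  omega

theorem true_cons_iff : QDecreasing q (true :: w) ↔ QDecreasing q w := by
  constructor
  · intro h u v a b ha hw hu hv
    refine h (true :: u) v a b ha (by simp [hw]) ?_ hv
    cases hl : u.getLast? <;> simp_all [getLast?_cons]
  · intro h u v a b ha hw hu hv
    cases u with
    | nil =>
      obtain ⟨a₀, rfl⟩ : ∃ a₀, a = a₀ + 1 := ⟨a - 1, by omega⟩
      simp [replicate_succ] at hw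
    | cons c u =>
      simp only [cons_append, cons.injEq] at hw
      refine h u v a b ha hw.2 ?_ hv
      cases hl : u.getLast? <;> simp_all [getLast?_cons]

theorem replicate_true_append_iff {j : ℕ} :
    QDecreasing q (replicate j true ++ w) ↔ QDecreasing q w := by
  induction j with
  | zero => rfl
  | succ j ih => rw [replicate_succ, cons_append, true_cons_iff, ih]

theorem replicate_false (hq : 0 < q) (a : ℕ) : QDecreasing q (replicate a false) := by
  intro u v a' b' ha' hw _ _
  rcases Nat.eq_zero_or_pos b' with rfl | hb'
  · simpa using mul_pos hq (Nat.cast_pos.2 ha')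
  · have : true ∈ replicate a false := by
      rw [hw]
      simp [hb'.ne']
    simp at this

theorem replicate_append_replicate_append_iff (hq : 0 < q) {a b : ℕ} (ha : 0 < a) (hb : 0 < b)
    (hx : x.head? ≠ some true) :
    QDecreasing q (replicate a false ++ replicate b true ++ x) ↔
      q * a > b ∧ QDecreasing q x := by
  constructor
  · intro h
    refine ⟨h [] x a b ha (by simp) (by simp) hx, fun u v a' b' ha' hw hu hv => ?_⟩
    refine h (replicate a false ++ replicate b true ++ u) v a' b' ha' (by simp [hw]) ?_ hv
    rw [getLast?_append]
    cases hl : u.getLast? with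
    | none =>
      obtain ⟨b₀, rfl⟩ : ∃ b₀, b = b₀ + 1 := ⟨b - 1, by omega⟩
      simp [replicate_succ']
    | some c => simpa [hl] using hu
  · rintro ⟨hab, hx'⟩ u v a' b' ha' hw hu hv
    rcases Nat.eq_zero_or_pos b' with rfl | hb'
    · simpa using mul_pos hq (Nat.cast_pos.2 ha')
    rcases eq_or_exists_of_replicate_append_eq hb ha' hb' hx hu hv hw with
      ⟨rfl, rfl⟩ | ⟨u₀, rfl, hx₀⟩
    · exact hab
    · refine hx' u₀ v a' b' ha' hx₀ ?_ hv
      cases hl : u₀.getLast? <;> simp_all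

theorem replicate_false_append_true_cons_iff {k a : ℕ} (hk : 0 < k) (ha : 0 < a) :
    QDecreasing k (replicate a false ++ true :: w) ↔
      QDecreasing k w ∧ ¬ replicate (k * a - 1) true <+: w := by
  obtain ⟨j, x, rfl, hx⟩ := w.exists_eq_replicate_append true
  have hcast : (k : ℝ) * a > (j + 1 : ℕ) ↔ j + 1 < k * a := by exact_mod_cast Iff.rfl
  rw [← cons_append, ← replicate_succ, ← append_assoc,
    replicate_append_replicate_append_iff (by exact_mod_cast hk) ha j.succ_pos hx, hcast,
    replicate_true_append_iff, replicate_prefix_replicate_append_iff hx]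
  exact ⟨fun h => ⟨h.2, by omega⟩, fun h => ⟨by omega, h.1⟩⟩

end QDecreasing

noncomputable def wordCount (n : ℕ) (P : List Bool → Prop) : ℕ :=
  Nat.card {w : List Bool // w.length = n ∧ P w}

instance (n : ℕ) (P : List Bool → Prop) : Finite {w : List Bool // w.length = n ∧ P w} :=
  have : Finite {w : List Bool | w.length = n} := (List.finite_length_eq Bool n).to_subtype
  Finite.Set.subset {w : List Bool | w.length = n} fun _ hw => hw.1

theorem wordCount_congr {n : ℕ} {P Q : List Bool → Prop}
    (h : ∀ w : List Bool, w.length = n → (P w ↔ Q w)) : wordCount n P = wordCount n Q :=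
  Nat.card_congr <| Equiv.subtypeEquivRight fun w => and_congr_right (h w)

theorem wordCount_zero_eq_one {P : List Bool → Prop} (h : P []) : wordCount 0 P = 1 :=
  Nat.card_eq_one_iff_exists.2
    ⟨⟨[], rfl, h⟩, fun w => Subtype.ext (length_eq_zero_iff.1 w.2.1)⟩

theorem wordCount_eq_zero {n : ℕ} {P : List Bool → Prop}
    (h : ∀ w : List Bool, w.length = n → ¬ P w) : wordCount n P = 0 :=
  Nat.card_eq_zero.2 <| .inl ⟨fun w => h w.1 w.2.1 w.2.2⟩

def lengthSuccEquiv (n : ℕ) (P : List Bool → Prop) :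
    {w : List Bool // w.length = n + 1 ∧ P w} ≃
      {w : List Bool // w.length = n ∧ P (false :: w)} ⊕
        {w : List Bool // w.length = n ∧ P (true :: w)} where
  toFun
    | ⟨false :: w, h⟩ => .inl ⟨w, by simpa using h⟩
    | ⟨true :: w, h⟩ => .inr ⟨w, by simpa using h⟩
  invFun
    | .inl ⟨w, h⟩ => ⟨false :: w, by simpa using h⟩
    | .inr ⟨w, h⟩ => ⟨true :: w, by simpa using h⟩
  left_inv := by rintro ⟨_ | ⟨_ | _, w⟩, h⟩ <;> first | rfl | simp at h
  right_inv := by rintro (⟨w, h⟩ | ⟨w, h⟩) <;> rfl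

theorem wordCount_succ (n : ℕ) (P : List Bool → Prop) :
    wordCount (n + 1) P =
      wordCount n (fun w => P (false :: w)) + wordCount n (fun w => P (true :: w)) := by
  rw [wordCount, Nat.card_congr (lengthSuccEquiv n P), Nat.card_sum]; rfl

theorem wordCount_and_not_replicate_prefix_add (P : List Bool → Prop) (n j : ℕ) :
    wordCount n (fun w => P w ∧ ¬ replicate j true <+: w) +
        (if j ≤ n then wordCount (n - j) (fun w => P (replicate j true ++ w)) else 0) =
      wordCount n P := by
  induction n generalizing j P with
  | zero =>
    cases j with
    | zero => simp [wordCount_eq_zero]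
    | succ j =>
      rw [if_neg (by omega), add_zero]
      exact wordCount_congr fun w hw => by simp [length_eq_zero_iff.1 hw]
  | succ n ih =>
    cases j with
    | zero => simp [wordCount_eq_zero]
    | succ j =>
      have hfalse :
          wordCount n (fun w => P (false :: w) ∧ ¬ replicate (j + 1) true <+: false :: w) =
            wordCount n (fun w => P (false :: w)) :=
        wordCount_congr fun w _ => by simp [replicate_succ]
      have htrue :
          wordCount n (fun w => P (true :: w) ∧ ¬ replicate (j + 1) true <+: true :: w) =
            wordCount n (fun w => P (true :: w) ∧ ¬ replicate j true <+: w) :=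
        wordCount_congr fun w _ => by simp [replicate_succ]
      have := ih (fun w => P (true :: w)) j
      simp only [← cons_append, ← replicate_succ] at this
      rw [wordCount_succ, wordCount_succ, hfalse, htrue, Nat.add_sub_add_right]
      split_ifs at this ⊢ <;> omega

def strideSum (k : ℕ) (f : ℕ → ℕ) (m : ℕ) : ℕ :=
  f m + if k + 1 ≤ m then strideSum k f (m - (k + 1)) else 0
termination_by m
decreasing_by omega

/-- For `m > k` this says `f m = f (m - 1) + ⋯ + f (m - k - 1)`, and for `m ≤ k` it forces
`f m = 2 ^ m`. -/
def IsGenFibonacci (k : ℕ) (f : ℕ → ℕ) : Prop :=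
  ∀ m, f m + (if k + 1 ≤ m then 1 + ∑ i ∈ Finset.range (m - (k + 1)), f i else 0) =
    1 + ∑ i ∈ Finset.range m, f i

theorem IsGenFibonacci.of_strideSum_eq {k : ℕ} {f : ℕ → ℕ}
    (h : ∀ m, strideSum k f m = 1 + ∑ i ∈ Finset.range m, f i) : IsGenFibonacci k f := by
  intro m
  rw [← h m, strideSum]
  split_ifs <;> simp [h]

theorem IsGenFibonacci.eq {k : ℕ} {f g : ℕ → ℕ} (hf : IsGenFibonacci k f)
    (hg : IsGenFibonacci k g) : f = g := by
  funext m
  induction m using Nat.strong_induction_on with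
  | _ m ih =>
  have hsum : ∀ n ≤ m, ∑ i ∈ Finset.range n, f i = ∑ i ∈ Finset.range n, g i :=
    fun n hn => Finset.sum_congr rfl fun i hi => ih i (by simp at hi; omega)
  have hfm := hf m
  have hgm := hg m
  rw [hsum m le_rfl, hsum (m - (k + 1)) (by omega)] at hfm
  omega

section Decreasing

variable {k : ℕ}

theorem wordCount_qDecreasing_succ (n : ℕ) :
    wordCount (n + 1) (QDecreasing k) =
      wordCount n (fun w => QDecreasing k (replicate 1 false ++ w)) +
        wordCount n (QDecreasing k) := by
  rw [wordCount_succ]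
  congr 1
  exact wordCount_congr fun w _ => QDecreasing.true_cons_iff

theorem wordCount_replicate_false_append_succ (hk : 0 < k) {a : ℕ} (ha : 0 < a) (n : ℕ) :
    wordCount (n + 1) (fun w => QDecreasing k (replicate a false ++ w)) +
        (if k * a ≤ n + 1 then wordCount (n + 1 - k * a) (QDecreasing k) else 0) =
      wordCount n (fun w => QDecreasing k (replicate (a + 1) false ++ w)) +
        wordCount n (QDecreasing k) := by
  have hka : 0 < k * a := Nat.mul_pos hk ha
  have hsplit := wordCount_and_not_replicate_prefix_add (QDecreasing k) n (k * a - 1)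
  rw [wordCount_congr (Q := QDecreasing k) fun w _ => QDecreasing.replicate_true_append_iff,
    show n - (k * a - 1) = n + 1 - k * a by omega] at hsplit
  rw [wordCount_succ,
    wordCount_congr (Q := fun w => QDecreasing k (replicate (a + 1) false ++ w)) fun w _ => by
      rw [replicate_succ', append_assoc, singleton_append],
    wordCount_congr fun w _ => QDecreasing.replicate_false_append_true_cons_iff hk ha]
  split_ifs at hsplit ⊢ <;> omega

theorem wordCount_replicate_false_append_add (hk : 0 < k) {a : ℕ} (ha : 0 < a) (n : ℕ) :
    wordCount n (fun w => QDecreasing k (replicate a false ++ w)) +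
        (if k * a ≤ n then strideSum k (fun m => wordCount m (QDecreasing k)) (n - k * a)
          else 0) =
      1 + ∑ i ∈ Finset.range n, wordCount i (QDecreasing k) := by
  have hka : 0 < k * a := Nat.mul_pos hk ha
  induction n generalizing a with
  | zero =>
    have h₀ := QDecreasing.replicate_false (q := k) (by exact_mod_cast hk) a
    rw [if_neg (by omega), wordCount_zero_eq_one (by simpa using h₀)]
    simp
  | succ n ih =>
    have hstep := wordCount_replicate_false_append_succ hk ha n
    have hnext := ih (a := a + 1) (by omega) (by positivity)
    have e : k * (a + 1) = k * a + k := by ring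
    rw [Finset.sum_range_succ]
    by_cases h : k * a ≤ n + 1
    · rw [if_pos h, strideSum]
      rw [if_pos h] at hstep
      by_cases h' : k * (a + 1) ≤ n
      · rw [if_pos (by omega), show n + 1 - k * a - (k + 1) = n - k * (a + 1) by omega]
        rw [if_pos h'] at hnext
        omega
      · rw [if_neg (by omega)]
        rw [if_neg h'] at hnext
        omega
    · rw [if_neg h]
      rw [if_neg h] at hstep
      rw [if_neg (by omega)] at hnext
      omega

theorem strideSum_wordCount_qDecreasing (hk : 0 < k) (m : ℕ) :
    strideSum k (fun m => wordCount m (QDecreasing k)) m =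
      1 + ∑ i ∈ Finset.range m, wordCount i (QDecreasing k) := by
  cases m with
  | zero => simp [strideSum, wordCount_zero_eq_one QDecreasing.nil]
  | succ n =>
    have h := wordCount_replicate_false_append_add hk one_pos n
    rw [mul_one] at h
    rw [strideSum, wordCount_qDecreasing_succ, Finset.sum_range_succ,
      show n + 1 - (k + 1) = n - k by omega]
    split_ifs at h ⊢ <;> omega

end Decreasing

section RunFree

variable {k : ℕ} {w : List Bool}

theorem not_replicate_infix_false_cons_iff :
    ¬ replicate (k + 1) true <:+: false :: w ↔ ¬ replicate (k + 1) true <:+: w := by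
  simp [infix_cons_iff, replicate_succ]

theorem not_replicate_infix_true_cons_and_iff {r : ℕ} (hr : r ≤ k) :
    (¬ replicate (k + 1) true <:+: true :: w ∧ ¬ replicate (r + 1) true <+: true :: w) ↔
      (¬ replicate (k + 1) true <:+: w ∧ ¬ replicate r true <+: w) := by
  have hrk : replicate r true <+: replicate k true := prefix_replicate_iff.2 ⟨by simpa, by simp⟩
  simp only [infix_cons_iff, replicate_succ, cons_prefix_cons, true_and, not_or]
  exact ⟨fun h => ⟨h.1.2, h.2⟩, fun h => ⟨⟨fun h' => h.2 (hrk.trans h'), h.1⟩, h.2⟩⟩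

theorem wordCount_runFree_and_not_prefix_add {r : ℕ} (hr : r ≤ k + 1) (n : ℕ) :
    wordCount n (fun w => ¬ replicate (k + 1) true <:+: w ∧ ¬ replicate r true <+: w) +
        (if r ≤ n then
          1 + ∑ i ∈ Finset.range (n - r), wordCount i (¬ replicate (k + 1) true <:+: ·)
          else 0) =
      1 + ∑ i ∈ Finset.range n, wordCount i (¬ replicate (k + 1) true <:+: ·) := by
  induction n generalizing r with
  | zero =>
    cases r with
    | zero => simp [wordCount_eq_zero]
    | succ r =>
      rw [wordCount_zero_eq_one (by simp [replicate_succ])]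
      simp
  | succ n ih =>
    cases r with
    | zero => simp [wordCount_eq_zero]
    | succ r =>
      rw [wordCount_succ,
        wordCount_congr fun w _ => not_replicate_infix_true_cons_and_iff (by omega),
        wordCount_congr (Q := (¬ replicate (k + 1) true <:+: ·)) fun w _ => by
          rw [not_replicate_infix_false_cons_iff]
          simp [replicate_succ],
        Finset.sum_range_succ, Nat.add_sub_add_right]
      simp only [Nat.add_le_add_iff_right]
      have := ih (r := r) (by omega)
      omega

theorem isGenFibonacci_wordCount_runFree (k : ℕ) :
    IsGenFibonacci k (fun n => wordCount n (¬ replicate (k + 1) true <:+: ·)) := fun n => by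
  have h := wordCount_runFree_and_not_prefix_add (k := k) le_rfl n
  rwa [wordCount_congr fun w _ => and_iff_left_of_imp fun h h' => h h'.isInfix] at h

end RunFree

/-- For every positive integer `k`, the number of `k`-decreasing binary words
of length `n` equals the number of binary words of length `n` avoiding `k+1`
consecutive `1`s. -/
theorem stmt_9 (k : ℕ) (hk : 0 < k) (n : ℕ) :
    Nat.card {w : List Bool // w.length = n ∧ QDecreasing (k : ℝ) w} =
      Nat.card {w : List Bool // w.length = n ∧
        ¬ (List.replicate (k + 1) true <:+: w)} :=
  congrFun ((IsGenFibonacci.of_strideSum_eq (strideSum_wordCount_qDecreasing hk)).eq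
    (isGenFibonacci_wordCount_runFree k)) n
end

section
/- Let q = c/d be an irreducible positive fraction. The polynomial Π_q(x) = 1 - x^{c+d} - Σ_{i=0}^{c-1} x^{1+i+⌊i·d/c⌋} has a unique root of smallest modulus among its complex roots, and this root is real and lies in (0,1). -/
/-!
Write `Π_q = 1 - Q` with `Q = X^(c+d) + ∑ X^(1+i+⌊id/c⌋)`, a polynomial with nonnegative
coefficients whose linear coefficient is positive (the term `i = 0`). For such `Q` and `‖z‖ ≤ y`,
`Q y - Re Q(z) = ∑ aₙ (yⁿ - Re zⁿ) ≥ a₁ (y - Re z) ≥ 0`. Hence `Q` is strictly increasing on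
`[0, ∞)`, the intermediate value theorem gives the real solution `ρ ∈ (0,1)` of `Q ρ = 1`, any
complex solution satisfies `1 = Re Q(z) ≤ Q ‖z‖`, so `ρ ≤ ‖z‖`, and if `‖z‖ = ρ` the defect
`a₁ (‖z‖ - Re z)` vanishes, so `z = ‖z‖ = ρ`.
-/

open Polynomial Set

namespace Polynomial

section MonomialSum

variable {R ι : Type*} [Semiring R] [PartialOrder R] [IsOrderedRing R] (s : Finset ι) (f : ι → ℕ)

theorem coeff_sum_X_pow_nonneg (n : ℕ) : 0 ≤ (∑ i ∈ s, X ^ f i : R[X]).coeff n := by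
  rw [finsetSum_coeff]
  exact Finset.sum_nonneg fun i _ => by rw [coeff_X_pow]; exact ite_nonneg zero_le_one le_rfl

theorem one_le_coeff_sum_X_pow {j : ι} (hj : j ∈ s) :
    1 ≤ (∑ i ∈ s, X ^ f i : R[X]).coeff (f j) := by
  rw [finsetSum_coeff]
  simpa using Finset.single_le_sum (f := fun i => (X ^ f i : R[X]).coeff (f j))
    (fun i _ => by rw [coeff_X_pow]; exact ite_nonneg zero_le_one le_rfl) hj

end MonomialSum

variable {Q : ℝ[X]}

theorem coeff_one_mul_sub_re_le_eval_sub_re_aeval (hQ : ∀ n, 0 ≤ Q.coeff n) {z : ℂ} {y : ℝ}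
    (hzy : ‖z‖ ≤ y) : Q.coeff 1 * (y - z.re) ≤ Q.eval y - (aeval z Q).re := by
  have hn : Q.natDegree < Q.natDegree + 2 := by omega
  have hterm : ∀ i, 0 ≤ Q.coeff i * (y ^ i - (z ^ i).re) := fun i =>
    mul_nonneg (hQ i) <| sub_nonneg.2 <|
      (Complex.re_le_norm _).trans (by rw [norm_pow]; gcongr)
  rw [aeval_def, eval₂_eq_sum_range' _ hn, eval_eq_sum_range' hn, Complex.re_sum,
    ← Finset.sum_sub_distrib]
  simp only [Complex.coe_algebraMap, Complex.re_ofReal_mul, ← mul_sub]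
  simpa using Finset.single_le_sum (fun i _ => hterm i) (by simp : 1 ∈ Finset.range _)

theorem strictMonoOn_eval_Ici (hQ : ∀ n, 0 ≤ Q.coeff n) (h1 : 0 < Q.coeff 1) :
    StrictMonoOn (fun x => Q.eval x) (Ici 0) := by
  intro x hx y _ hxy
  have := coeff_one_mul_sub_re_le_eval_sub_re_aeval hQ (z := x) (y := y)
    (by rw [Complex.norm_real, Real.norm_of_nonneg hx]; exact hxy.le)
  rw [← Complex.coe_algebraMap, aeval_algebraMap_apply_eq_algebraMap_eval] at this
  simp only [Complex.coe_algebraMap, Complex.ofReal_re] at this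
  linarith [mul_pos h1 (sub_pos.2 hxy)]

theorem exists_root_lt_norm_of_aeval_eq_one (hQ : ∀ n, 0 ≤ Q.coeff n) (h0 : Q.eval 0 < 1)
    (h1 : 0 < Q.coeff 1) (hQ1 : 1 < Q.eval 1) :
    ∃ ρ ∈ Ioo (0 : ℝ) 1, Q.eval ρ = 1 ∧ ∀ z : ℂ, aeval z Q = 1 → z ≠ ρ → ρ < ‖z‖ := by
  obtain ⟨ρ, hρ, hQρ : Q.eval ρ = 1⟩ :=
    intermediate_value_Ioo zero_le_one Q.continuous.continuousOn ⟨h0, hQ1⟩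
  refine ⟨ρ, hρ, hQρ, fun z hz hzρ => ?_⟩
  have key := coeff_one_mul_sub_re_le_eval_sub_re_aeval hQ (le_refl ‖z‖)
  rw [hz, Complex.one_re] at key
  have hle : ρ ≤ ‖z‖ := by
    by_contra! hlt
    have := strictMonoOn_eval_Ici hQ h1 (norm_nonneg z) hρ.1.le hlt
    simp only at this
    linarith [mul_nonneg h1.le (sub_nonneg.2 (Complex.re_le_norm z))]
  refine hle.lt_of_ne fun hρz => hzρ ?_
  have hre : z.re = ‖z‖ := by
    rw [← hρz, hQρ] at key
    nlinarith [Complex.re_le_norm z]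
  have him : z.im = 0 := Complex.abs_re_eq_norm.1 (by rw [hre, abs_norm])
  exact Complex.ext (by simp [hre, hρz]) (by simp [him])

end Polynomial

theorem stmt_10_general (c d : ℕ) (hc : 0 < c) :
    ∃ ρ : ℝ, ρ ∈ Set.Ioo (0:ℝ) 1 ∧
      ((1 : Polynomial ℂ) - X ^ (c + d) -
        ∑ i ∈ Finset.range c, X ^ (1 + i + i * d / c)).IsRoot (ρ : ℂ) ∧
      ∀ z : ℂ,
        ((1 : Polynomial ℂ) - X ^ (c + d) -
          ∑ i ∈ Finset.range c, X ^ (1 + i + i * d / c)).IsRoot z →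
        z ≠ (ρ : ℂ) → ρ < ‖z‖ := by
  set Q : ℝ[X] := X ^ (c + d) + ∑ i ∈ Finset.range c, X ^ (1 + i + i * d / c)
  have hroot : ∀ z : ℂ, ((1 : ℂ[X]) - X ^ (c + d) -
      ∑ i ∈ Finset.range c, X ^ (1 + i + i * d / c)).IsRoot z ↔ aeval z Q = 1 := by
    intro z
    simp only [IsRoot, Q, eval_sub, eval_one, eval_pow, eval_X, eval_finsetSum, map_add,
      map_pow, aeval_X, map_sum]
    constructor <;> intro h <;> linear_combination -h
  have hQ : ∀ n, 0 ≤ Q.coeff n := fun n => by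
    rw [coeff_add, coeff_X_pow]
    exact add_nonneg (by positivity) (coeff_sum_X_pow_nonneg _ _ n)
  have h1 : 0 < Q.coeff 1 := by
    rw [coeff_add, coeff_X_pow]
    have := one_le_coeff_sum_X_pow (R := ℝ) _ (fun i => 1 + i + i * d / c) (Finset.mem_range.2 hc)
    simp only [zero_mul, Nat.zero_div, add_zero] at this
    exact add_pos_of_nonneg_of_pos (ite_nonneg zero_le_one le_rfl) (zero_lt_one.trans_le this)
  obtain ⟨ρ, hρ, hQρ, hmin⟩ := exists_root_lt_norm_of_aeval_eq_one hQ
    (by simp [Q, eval_finsetSum, zero_pow (show c + d ≠ 0 by omega)]) h1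
    (by simp [Q, eval_finsetSum, hc])
  refine ⟨ρ, hρ, (hroot ρ).2 ?_, fun z hz => hmin z ((hroot z).1 hz)⟩
  rw [← Complex.coe_algebraMap, aeval_algebraMap_apply_eq_algebraMap_eval, hQρ, map_one]

/-- For an irreducible positive fraction `q = c/d`, the polynomial
`Π_q(x) = 1 - x^(c+d) - ∑_{i=0}^{c-1} x^(1+i+⌊i·d/c⌋)` has a unique root of
smallest modulus among its complex roots, and this root is real and lies in
`(0,1)`. (Here `i * d / c` is natural-number division, i.e. the floor.) -/
theorem stmt_10 (c d : ℕ) (hc : 0 < c) (hd : 0 < d) (hcd : Nat.Coprime c d) :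
    ∃ ρ : ℝ, ρ ∈ Set.Ioo (0:ℝ) 1 ∧
      ((1 : Polynomial ℂ) - X ^ (c + d) -
        ∑ i ∈ Finset.range c, X ^ (1 + i + i * d / c)).IsRoot (ρ : ℂ) ∧
      ∀ z : ℂ,
        ((1 : Polynomial ℂ) - X ^ (c + d) -
          ∑ i ∈ Finset.range c, X ^ (1 + i + i * d / c)).IsRoot z →
        z ≠ (ρ : ℂ) → ρ < ‖z‖ :=
  stmt_10_general c d hc
end

section
/- Let q = c/d be an irreducible positive fraction and let ρ be a complex number with 0 < |ρ| < 1. Then Σ_{i=0}^∞ ρ^{1+i+⌊i·d/c⌋} = (Σ_{i=0}^{c-1} ρ^{1+i+⌊i·d/c⌋})/(1 - ρ^{c+d}). In particular, Σ_{i=0}^∞ ρ^{1+i+⌊i/q⌋} = 1 if and only if 1 - ρ^{c+d} - Σ_{i=0}^{c-1} ρ^{1+i+⌊i·d/c⌋} = 0. -/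
/-!
Since `⌊(i + c)d/c⌋ = ⌊id/c⌋ + d`, shifting the index by `c` multiplies each term of the series
by `ρ^(c+d)`. Splitting off the first `c` terms therefore gives `T = S + ρ^(c+d) T` for the sum
`T` of the series and the partial sum `S`, and `ρ^(c+d) ≠ 1` because `‖ρ‖ < 1`.
-/

open Finset

theorem tsum_eq_sum_range_div_of_add_period {K : Type*} [Field K] [TopologicalSpace K]
    [IsTopologicalRing K] [T2Space K] {f : ℕ → K} (hf : Summable f) {c : ℕ} {r : K}
    (hr : r ≠ 1) (hperiod : ∀ i, f (i + c) = r * f i) :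
    ∑' i, f i = (∑ i ∈ range c, f i) / (1 - r) := by
  have hsplit : ∑' i, f i = ∑ i ∈ range c, f i + r * ∑' i, f i := by
    rw [← tsum_mul_left, ← hf.sum_add_tsum_nat_add c]
    simp only [hperiod]
  rw [eq_div_iff (sub_ne_zero.2 hr.symm)]
  linear_combination hsplit

theorem summable_pow_of_le_exponent {K : Type*} [NormedRing K] [NormOneClass K] [CompleteSpace K]
    {ρ : K} (hρ : ‖ρ‖ < 1) {e : ℕ → ℕ} (he : ∀ i, i ≤ e i) :
    Summable fun i => ρ ^ e i := by
  refine .of_norm_bounded (summable_geometric_of_lt_one (norm_nonneg ρ) hρ) fun i => ?_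
  calc ‖ρ ^ e i‖ ≤ ‖ρ‖ ^ e i := norm_pow_le ρ _
    _ ≤ ‖ρ‖ ^ i := pow_le_pow_of_le_one (norm_nonneg ρ) hρ.le (he i)

theorem Nat.add_mul_div_self_right {c : ℕ} (hc : 0 < c) (i d : ℕ) :
    (i + c) * d / c = i * d / c + d := by
  rw [add_mul, Nat.add_mul_div_left _ _ hc]

theorem stmt_11_general (c d : ℕ) (hc : 0 < c)
    (ρ : ℂ) (hρ1 : ‖ρ‖ < 1) :
    (∑' i : ℕ, ρ ^ (1 + i + i * d / c)) =
      (∑ i ∈ Finset.range c, ρ ^ (1 + i + i * d / c)) / (1 - ρ ^ (c + d)) ∧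
    ((∑' i : ℕ, ρ ^ (1 + i + i * d / c)) = 1 ↔
      1 - ρ ^ (c + d) - ∑ i ∈ Finset.range c, ρ ^ (1 + i + i * d / c) = 0) := by
  have hr : ρ ^ (c + d) ≠ 1 := fun h => by
    simpa [← norm_pow, h] using pow_lt_one₀ (norm_nonneg ρ) hρ1 (by omega : c + d ≠ 0)
  have hsummable : Summable fun i : ℕ => ρ ^ (1 + i + i * d / c) :=
    summable_pow_of_le_exponent hρ1 fun i => Nat.le_add_right_of_le (Nat.le_add_left i 1)
  have htsum := tsum_eq_sum_range_div_of_add_period hsummable hr fun i => by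
    rw [Nat.add_mul_div_self_right hc, ← pow_add]
    congr 1
    omega
  refine ⟨htsum, ?_⟩
  rw [htsum, div_eq_one_iff_eq (sub_ne_zero.2 hr.symm), sub_sub, sub_eq_zero,
    eq_sub_iff_add_eq', eq_comm]

/-- Let `q = c/d` be an irreducible positive fraction and `ρ` a complex number
with `0 < |ρ| < 1`. Then
`∑_{i=0}^∞ ρ^(1+i+⌊i·d/c⌋) = (∑_{i=0}^{c-1} ρ^(1+i+⌊i·d/c⌋)) / (1 - ρ^(c+d))`,
and consequently `∑_{i=0}^∞ ρ^(1+i+⌊i/q⌋) = 1` iff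
`1 - ρ^(c+d) - ∑_{i=0}^{c-1} ρ^(1+i+⌊i·d/c⌋) = 0`.
(Here `i * d / c` is natural-number division, i.e. the floor.) -/
theorem stmt_11 (c d : ℕ) (hc : 0 < c) (hd : 0 < d) (hcd : Nat.Coprime c d)
    (ρ : ℂ) (hρ0 : 0 < ‖ρ‖) (hρ1 : ‖ρ‖ < 1) :
    (∑' i : ℕ, ρ ^ (1 + i + i * d / c)) =
      (∑ i ∈ Finset.range c, ρ ^ (1 + i + i * d / c)) / (1 - ρ ^ (c + d)) ∧
    ((∑' i : ℕ, ρ ^ (1 + i + i * d / c)) = 1 ↔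
      1 - ρ ^ (c + d) - ∑ i ∈ Finset.range c, ρ ^ (1 + i + i * d / c) = 0) :=
  stmt_11_general c d hc ρ hρ1
end

section
/- For every positive integer k, the positive real root ρ_{k/(k+1)} in (0,1) of the polynomial 1 - x^{2k+1} - Σ_{i=0}^{k-1} x^{1+2i} satisfies x + x^2 - 1 = x^{2k+3} (i.e., ρ_{k/(k+1)} is a root of 1 - x - x^2 + x^{2k+3}), and ρ_{k/(k+1)} → ρ_1 as k → ∞, where ρ_1 = (√5 − 1)/2 is the root in (0,1) of 1 - x - x^2. -/
open Filter

/-!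
Multiplying `1 - x^(2k+1) - ∑_{i<k} x^(1+2i)` by `1 - x²` telescopes the odd geometric sum and
leaves `1 - x - x² + x^(2k+3)`. A root `x ∈ (0,1)` of the latter satisfies
`(x - φ⁻¹)(x + φ) = x^(2k+3)`, so `0 ≤ x - φ⁻¹ ≤ x^(2k+3)`; since these roots stay below `3/4`,
the right-hand side tends to `0`.
-/

open Real goldenRatio

theorem one_sub_sq_mul_one_sub_pow_sub_sum_odd_pow {R : Type*} [CommRing R] (x : R) (k : ℕ) :
    (1 - x ^ 2) * (1 - x ^ (2 * k + 1) - ∑ i ∈ Finset.range k, x ^ (1 + 2 * i)) =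
      1 - x - x ^ 2 + x ^ (2 * k + 3) := by
  have hsum : ∑ i ∈ Finset.range k, x ^ (1 + 2 * i) = x * ∑ i ∈ Finset.range k, (x ^ 2) ^ i := by
    rw [Finset.mul_sum]
    exact Finset.sum_congr rfl fun i _ => by rw [pow_add, pow_mul, pow_one]
  rw [hsum, mul_sub, ← mul_assoc, mul_comm _ x, mul_assoc, mul_neg_geom_sum, ← pow_mul]
  ring

theorem sub_inv_goldenRatio_mul_add_goldenRatio (x : ℝ) :
    (x - φ⁻¹) * (x + φ) = x ^ 2 + x - 1 := by
  have hsub : φ - φ⁻¹ = 1 := by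
    rw [inv_goldenRatio, sub_neg_eq_add, goldenRatio_add_goldenConj]
  have hmul : φ⁻¹ * φ = 1 := inv_mul_cancel₀ goldenRatio_ne_zero
  linear_combination x * hsub - hmul

section RootsNearGoldenRatioInv

variable {x : ℝ} {n : ℕ}

theorem le_three_quarters_of_root (hx0 : 0 ≤ x) (hx1 : x < 1) (hn : 5 ≤ n)
    (h : 1 - x - x ^ 2 + x ^ n = 0) : x ≤ 3 / 4 := by
  by_contra! hx
  have hpow : x ^ n ≤ x ^ 5 := pow_le_pow_of_le_one hx0 hx1.le hn
  have hquartic : 1 < x ^ 2 + x ^ 3 + x ^ 4 := by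
    have hpow_lt (m : ℕ) (hm : m ≠ 0) : (3 / 4 : ℝ) ^ m < x ^ m :=
      pow_lt_pow_left₀ hx (by norm_num) hm
    linarith [hpow_lt 2 two_ne_zero, hpow_lt 3 three_ne_zero, hpow_lt 4 four_ne_zero]
  -- `1 - x - x² + x⁵ = (1 - x)(1 - x² - x³ - x⁴)`, which is negative here
  nlinarith [mul_pos (sub_pos.mpr hx1) (sub_pos.mpr hquartic)]

theorem abs_sub_inv_goldenRatio_le_pow_of_root (hx0 : 0 ≤ x)
    (h : 1 - x - x ^ 2 + x ^ n = 0) : |x - φ⁻¹| ≤ x ^ n := by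
  have hfactor : (x - φ⁻¹) * (x + φ) = x ^ n := by
    rw [sub_inv_goldenRatio_mul_add_goldenRatio]; linear_combination -h
  have hφ : 1 < x + φ := by linarith [one_lt_goldenRatio]
  have hpow : 0 ≤ x ^ n := pow_nonneg hx0 n
  have hnonneg : 0 ≤ x - φ⁻¹ := nonneg_of_mul_nonneg_left (hfactor ▸ hpow) (by linarith)
  rw [abs_of_nonneg hnonneg, ← hfactor]
  nlinarith

theorem abs_sub_inv_goldenRatio_le_of_root (hx0 : 0 ≤ x) (hx1 : x < 1) (hn : 5 ≤ n)
    (h : 1 - x - x ^ 2 + x ^ n = 0) : |x - φ⁻¹| ≤ (3 / 4) ^ n :=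
  (abs_sub_inv_goldenRatio_le_pow_of_root hx0 h).trans
    (pow_le_pow_left₀ hx0 (le_three_quarters_of_root hx0 hx1 hn h) n)

end RootsNearGoldenRatioInv

/-- For each positive integer `k`, the positive real root `ρ_{k/(k+1)} ∈ (0,1)`
of the polynomial `1 - x^(2k+1) - ∑_{i=0}^{k-1} x^(1+2i)` is also a root of
`1 - x - x² + x^(2k+3)`, and `ρ_{k/(k+1)} → ρ₁ = (√5 - 1)/2` as `k → ∞`,
where `ρ₁` is the root in `(0,1)` of `1 - x - x²`. -/
theorem stmt_12 (ρ : ℕ → ℝ)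
    (hmem : ∀ k : ℕ, 1 ≤ k → ρ k ∈ Set.Ioo (0:ℝ) 1)
    (hroot : ∀ k : ℕ, 1 ≤ k →
      1 - ρ k ^ (2 * k + 1) - ∑ i ∈ Finset.range k, ρ k ^ (1 + 2 * i) = 0) :
    (∀ k : ℕ, 1 ≤ k → 1 - ρ k - ρ k ^ 2 + ρ k ^ (2 * k + 3) = 0) ∧
      Tendsto ρ atTop (nhds ((Real.sqrt 5 - 1) / 2)) := by
  have hroot' : ∀ k : ℕ, 1 ≤ k → 1 - ρ k - ρ k ^ 2 + ρ k ^ (2 * k + 3) = 0 := fun k hk => by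
    rw [← one_sub_sq_mul_one_sub_pow_sub_sum_odd_pow, hroot k hk, mul_zero]
  refine ⟨hroot', ?_⟩
  have hlimit : (√5 - 1) / 2 = φ⁻¹ := by rw [inv_goldenRatio, goldenConj]; ring
  rw [hlimit, tendsto_iff_norm_sub_tendsto_zero]
  have hbound : Tendsto (fun k : ℕ => (3 / 4 : ℝ) ^ (2 * k + 3)) atTop (nhds 0) :=
    (tendsto_pow_atTop_nhds_zero_of_lt_one (by norm_num) (by norm_num)).comp
      (tendsto_atTop_mono (fun k => show k ≤ 2 * k + 3 by omega) tendsto_id)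
  refine squeeze_zero_norm' ?_ hbound
  filter_upwards [eventually_ge_atTop 1] with k hk
  obtain ⟨h0, h1⟩ := hmem k hk
  rw [norm_norm, Real.norm_eq_abs]
  exact abs_sub_inv_goldenRatio_le_of_root h0.le h1 (by omega) (hroot' k hk)
end

section
/- For every positive integer k, the root ρ_{k/(k+1)} ∈ (0,1) of 1 = x + x^2 - x^{2k+3} satisfies ρ_{k/(k+1)} = ρ_1 + C·ρ_1^{2k}·(1 + o(1)) as k → ∞, where ρ_1 = (√5−1)/2 and C = ρ_1^3/(1 + 2ρ_1). -/
/-!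
Writing `φ = (√5 - 1)/2`, so that `φ + φ² = 1`, the defining equation of `ρ = ρ k` becomes
`(ρ - φ)(1 + ρ + φ) = ρ^(2k+3)`. Hence `ρ > φ`, and since `ρ² < 3/5` uniformly, `ρ - φ ≤ (3/5)^k`;
in particular `ρ → φ` and `k (ρ/φ - 1) → 0`, so `(ρ/φ)^(2k) → 1`. The claim follows from
`(ρ - φ)/φ^(2k) = (ρ/φ)^(2k) · ρ³/(1 + ρ + φ)`.
-/

open Filter Topology

lemma add_sq_eq_one_of_eq_sqrt_five {φ : ℝ} (hφ : φ = (√5 - 1) / 2) : φ + φ ^ 2 = 1 := by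
  have h5 : √5 ^ 2 = 5 := Real.sq_sqrt (by norm_num)
  subst hφ
  linear_combination h5 / 4

lemma pos_of_eq_sqrt_five {φ : ℝ} (hφ : φ = (√5 - 1) / 2) : 0 < φ := by
  have : 1 < √5 := by rw [Real.lt_sqrt zero_le_one]; norm_num
  rw [hφ]; linarith

section Root

variable {φ x : ℝ} {k : ℕ}

lemma sub_mul_eq_pow_of_root (hφ : φ + φ ^ 2 = 1) (hx : x + x ^ 2 - x ^ (2 * k + 3) = 1) :
    (x - φ) * (1 + x + φ) = x ^ (2 * k + 3) := by
  linear_combination hx - hφ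

/-- Comparing with `x^5 ≥ x^(2k+3)` gives `x² + x³ + x⁴ ≤ 1`, hence `x⁴ ≤ 1/3 < (3/5)²`. -/
lemma sq_lt_of_root (hk : 1 ≤ k) (hx0 : 0 < x) (hx1 : x < 1)
    (hx : x + x ^ 2 - x ^ (2 * k + 3) = 1) : x ^ 2 < 3 / 5 := by
  have hle : x ^ (2 * k + 3) ≤ x ^ 5 := pow_le_pow_of_le_one hx0.le hx1.le (by omega)
  have hfac : (1 - x) * (x ^ 4 + x ^ 3 + x ^ 2 - 1) ≤ 0 := by nlinarith
  have hsum : x ^ 4 + x ^ 3 + x ^ 2 - 1 ≤ 0 :=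
    nonpos_of_mul_nonpos_right hfac (by linarith)
  have h43 : x ^ 4 ≤ x ^ 3 := pow_le_pow_of_le_one hx0.le hx1.le (by norm_num)
  have h32 : x ^ 3 ≤ x ^ 2 := pow_le_pow_of_le_one hx0.le hx1.le (by norm_num)
  nlinarith [sq_nonneg (x ^ 2)]

lemma lt_and_sub_le_of_root (hφ : φ + φ ^ 2 = 1) (hφ0 : 0 < φ) (hk : 1 ≤ k) (hx0 : 0 < x)
    (hx1 : x < 1) (hx : x + x ^ 2 - x ^ (2 * k + 3) = 1) :
    φ < x ∧ x - φ ≤ (3 / 5) ^ k := by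
  have hid := sub_mul_eq_pow_of_root hφ hx
  have hpow : 0 < x ^ (2 * k + 3) := pow_pos hx0 _
  have hgt : φ < x := by nlinarith
  refine ⟨hgt, ?_⟩
  calc x - φ ≤ (x - φ) * (1 + x + φ) := by nlinarith
    _ = x ^ (2 * k + 3) := hid
    _ ≤ x ^ (2 * k) := pow_le_pow_of_le_one hx0.le hx1.le (by omega)
    _ = (x ^ 2) ^ k := by rw [pow_mul]
    _ ≤ (3 / 5) ^ k := pow_le_pow_left₀ (sq_nonneg x) (sq_lt_of_root hk hx0 hx1 hx).le k

lemma sub_div_pow_eq_of_root (hφ : φ + φ ^ 2 = 1) (hφ0 : 0 < φ) (hx0 : 0 < x)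
    (hx : x + x ^ 2 - x ^ (2 * k + 3) = 1) :
    (x - φ) / φ ^ (2 * k) = (x / φ) ^ (2 * k) * (x ^ 3 / (1 + x + φ)) := by
  have hid := sub_mul_eq_pow_of_root hφ hx
  have hden : 0 < 1 + x + φ := by linarith
  rw [div_pow]
  field_simp
  rw [hid, pow_add, mul_comm]

end Root

lemma tendsto_pow_one_of_tendsto_mul_sub_one {ι : Type*} {l : Filter ι} {x : ι → ℝ} {m : ι → ℕ}
    (h1 : ∀ᶠ i in l, 1 ≤ x i) (h : Tendsto (fun i => (m i : ℝ) * (x i - 1)) l (𝓝 0)) :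
    Tendsto (fun i => x i ^ m i) l (𝓝 1) := by
  have hexp : Tendsto (fun i => Real.exp ((m i : ℝ) * (x i - 1))) l (𝓝 1) :=
    (Real.continuous_exp.tendsto 0 |>.comp h).trans_eq (congrArg 𝓝 Real.exp_zero)
  refine tendsto_of_tendsto_of_tendsto_of_le_of_le' tendsto_const_nhds hexp ?_ ?_
  · filter_upwards [h1] with i hi using one_le_pow₀ hi
  · filter_upwards [h1] with i hi
    calc x i ^ m i ≤ Real.exp (x i - 1) ^ m i :=
          pow_le_pow_left₀ (by linarith) (by linarith [Real.add_one_le_exp (x i - 1)]) _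
      _ = Real.exp ((m i : ℝ) * (x i - 1)) := (Real.exp_nat_mul _ _).symm

lemma tendsto_natCast_mul_of_le_pow {u : ℕ → ℝ} {r : ℝ} (hr0 : 0 ≤ r) (hr1 : r < 1)
    (hu : ∀ᶠ k in atTop, 0 ≤ u k ∧ u k ≤ r ^ k) :
    Tendsto (fun k : ℕ => (k : ℝ) * u k) atTop (𝓝 0) := by
  refine tendsto_of_tendsto_of_tendsto_of_le_of_le' tendsto_const_nhds
    (tendsto_self_mul_const_pow_of_lt_one hr0 hr1) ?_ ?_
  · filter_upwards [hu] with k hk using mul_nonneg k.cast_nonneg hk.1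
  · filter_upwards [hu] with k hk using mul_le_mul_of_nonneg_left hk.2 k.cast_nonneg

/-- Let `ρ₁ = (√5 - 1)/2` (the unique root in `(0,1)` of `1 - x - x²`) and for
each positive integer `k` let `ρ k ∈ (0,1)` be the unique root of
`x + x² - x^(2k+3) = 1`. Then `ρ k = ρ₁ + C·ρ₁^(2k)·(1 + o(1))` as `k → ∞`
with `C = ρ₁³/(1 + 2ρ₁)`, i.e. `(ρ k - ρ₁)/ρ₁^(2k) → ρ₁³/(1 + 2ρ₁)`. -/
theorem stmt_13 (ρ : ℕ → ℝ)
    (hmem : ∀ k : ℕ, 1 ≤ k → ρ k ∈ Set.Ioo (0:ℝ) 1)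
    (hroot : ∀ k : ℕ, 1 ≤ k → ρ k + ρ k ^ 2 - ρ k ^ (2 * k + 3) = 1) :
    Tendsto
      (fun k : ℕ => (ρ k - (Real.sqrt 5 - 1) / 2) / ((Real.sqrt 5 - 1) / 2) ^ (2 * k))
      atTop
      (nhds (((Real.sqrt 5 - 1) / 2) ^ 3 / (1 + 2 * ((Real.sqrt 5 - 1) / 2)))) := by
  set φ : ℝ := (√5 - 1) / 2 with hφdef
  have hφ := add_sq_eq_one_of_eq_sqrt_five hφdef
  have hφ0 := pos_of_eq_sqrt_five hφdef
  have hmem' : ∀ᶠ k in atTop, ρ k ∈ Set.Ioo (0 : ℝ) 1 := eventually_atTop.2 ⟨1, hmem⟩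
  have hroot' : ∀ᶠ k in atTop, ρ k + ρ k ^ 2 - ρ k ^ (2 * k + 3) = 1 :=
    eventually_atTop.2 ⟨1, hroot⟩
  have hbound : ∀ᶠ k in atTop, φ < ρ k ∧ ρ k - φ ≤ (3 / 5) ^ k := by
    filter_upwards [eventually_ge_atTop 1, hmem', hroot'] with k hk hx hx'
    exact lt_and_sub_le_of_root hφ hφ0 hk hx.1 hx.2 hx'
  have hsub : Tendsto (fun k : ℕ => (k : ℝ) * (ρ k - φ)) atTop (𝓝 0) :=
    tendsto_natCast_mul_of_le_pow (by norm_num) (by norm_num)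
      (hbound.mono fun k hk => ⟨sub_nonneg.2 hk.1.le, hk.2⟩)
  have hlim : Tendsto ρ atTop (𝓝 φ) := by
    refine tendsto_of_tendsto_of_tendsto_of_le_of_le' tendsto_const_nhds
      ((tendsto_pow_atTop_nhds_zero_of_lt_one (by norm_num : (0 : ℝ) ≤ 3 / 5)
        (by norm_num)).const_add φ |>.trans_eq (congrArg 𝓝 (add_zero φ))) ?_ ?_
    · filter_upwards [hbound] with k hk using hk.1.le
    · filter_upwards [hbound] with k hk using by linarith [hk.2]
  have hratio : Tendsto (fun k => (ρ k / φ) ^ (2 * k)) atTop (𝓝 1) := by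
    refine tendsto_pow_one_of_tendsto_mul_sub_one
      (hbound.mono fun k hk => (one_le_div hφ0).2 hk.1.le) ?_
    have := (mul_zero (2 / φ) ▸ hsub.const_mul (2 / φ) :)
    refine this.congr fun k => ?_
    push_cast
    field_simp
  have hrest : Tendsto (fun k => ρ k ^ 3 / (1 + ρ k + φ)) atTop (𝓝 (φ ^ 3 / (1 + 2 * φ))) :=
    (hlim.pow 3).div ((hlim.const_add 1).add_const φ |>.trans_eq (congrArg 𝓝 (by ring)))
      (by positivity)
  refine (one_mul (φ ^ 3 / (1 + 2 * φ)) ▸ hratio.mul hrest).congr' ?_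
  filter_upwards [hmem', hroot'] with k hx hx'
  exact (sub_div_pow_eq_of_root hφ hφ0 hx.1 hx').symm
end

section
/- Let p, r, c, d, k be positive integers with cr − dp = 1. The triangle with vertices A=(0,0), B=(c(k+1), d(k+1)), C=(p+ck, r+dk) has area (k+1)/2, contains exactly k+3 lattice points on its boundary, and contains no lattice points in its interior. -/
/-!
Write `w = (c, d)` and `v = (p + ck, r + dk)`, so that `B = (k + 1) w`, `C = v` and
`det (w, v) = cr - dp = 1`; the area is therefore `(k + 1) det (w, v) / 2 = (k + 1) / 2`.
Since `det (w, v) = 1`, Cramer's rule shows that a lattice point `z = s w + t v` has integer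
coordinates `s, t`. If `z` lies in the triangle then `0 ≤ t ≤ 1`, so either `t = 1` and `z = C`,
or `t = 0` and `z = s w` with `0 ≤ s ≤ k + 1` lies on the edge `AB`. Hence every lattice point
of the triangle lies on its boundary, and there are `(k + 2) + 1` of them.
-/

open MeasureTheory Set

theorem mem_convexHull_zero_pair_iff {𝕜 E : Type*} [Field 𝕜] [LinearOrder 𝕜]
    [IsStrictOrderedRing 𝕜] [AddCommGroup E] [Module 𝕜 E] {x y q : E} :
    q ∈ convexHull 𝕜 {0, x, y} ↔
      ∃ a b : 𝕜, 0 ≤ a ∧ 0 ≤ b ∧ a + b ≤ 1 ∧ q = a • x + b • y := by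
  rw [convexHull_insert (insert_nonempty x {y}), convexHull_pair, convexJoin_singleton_left,
    mem_iUnion₂]
  constructor
  · rintro ⟨_, ⟨s, t, hs, ht, hst, rfl⟩, u, v, hu, hv, huv, rfl⟩
    exact ⟨v * s, v * t, by positivity, by positivity, by nlinarith,
      by simp [smul_add, smul_smul]⟩
  · rintro ⟨a, b, ha, hb, hab, rfl⟩
    rcases (add_nonneg ha hb).eq_or_lt with h | h
    · obtain ⟨rfl, rfl⟩ : a = 0 ∧ b = 0 := by constructor <;> linarith
      exact ⟨x, left_mem_segment 𝕜 x y, by simpa using left_mem_segment 𝕜 0 x⟩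
    · refine ⟨(a / (a + b)) • x + (b / (a + b)) • y,
        ⟨a / (a + b), b / (a + b), by positivity, by positivity, by field_simp, rfl⟩,
        1 - (a + b), a + b, by linarith, h.le, by ring, ?_⟩
      simp only [smul_zero, zero_add, smul_add, smul_smul, mul_div_cancel₀ _ h.ne']

theorem smul_mem_segment_zero_smul {𝕜 E : Type*} [Field 𝕜] [LinearOrder 𝕜]
    [IsStrictOrderedRing 𝕜] [AddCommGroup E] [Module 𝕜 E] (x : E) {s t : 𝕜} (hs : 0 ≤ s)
    (hst : s ≤ t) :
    s • x ∈ segment 𝕜 0 (t • x) := by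
  rw [mem_segment_iff_sameRay, sub_zero, ← sub_smul]
  exact (SameRay.sameRay_nonneg_smul_right x (sub_nonneg.2 hst)).nonneg_smul_left hs

def triangleBoundary (A B C : ℝ × ℝ) : Set (ℝ × ℝ) :=
  segment ℝ A B ∪ segment ℝ B C ∪ segment ℝ C A

theorem triangleBoundary_subset_convexHull (A B C : ℝ × ℝ) :
    triangleBoundary A B C ⊆ convexHull ℝ {A, B, C} := by
  have hconv := convex_convexHull ℝ ({A, B, C} : Set (ℝ × ℝ))
  have hA : A ∈ convexHull ℝ {A, B, C} := subset_convexHull ℝ _ (by simp)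
  have hB : B ∈ convexHull ℝ {A, B, C} := subset_convexHull ℝ _ (by simp)
  have hC : C ∈ convexHull ℝ {A, B, C} := subset_convexHull ℝ _ (by simp)
  rintro x ((h | h) | h)
  exacts [hconv.segment_subset hA hB h, hconv.segment_subset hB hC h,
    hconv.segment_subset hC hA h]

theorem volume_convexHull_zero_basis :
    volume (convexHull ℝ {(0 : ℝ × ℝ), (1, 0), (0, 1)}) = ENNReal.ofReal (1 / 2) := by
  have hT : convexHull ℝ {(0 : ℝ × ℝ), (1, 0), (0, 1)} =
      {q : ℝ × ℝ | q.1 ∈ Icc 0 1 ∧ q.2 ∈ Icc 0 (1 - q.1)} := by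
    ext ⟨x, y⟩
    simp only [mem_convexHull_zero_pair_iff, Prod.smul_mk, smul_eq_mul, Prod.mk_add_mk,
      Prod.mk.injEq, mem_ofPred_eq, mem_Icc]
    constructor
    · rintro ⟨a, b, ha, hb, hab, rfl, rfl⟩
      refine ⟨⟨?_, ?_⟩, ?_, ?_⟩ <;> linarith
    · rintro ⟨⟨hx, -⟩, hy, hxy⟩
      exact ⟨x, y, hx, hy, by linarith, by ring, by ring⟩
  have hslice (x : ℝ) :
      volume (Prod.mk x ⁻¹' {q : ℝ × ℝ | q.1 ∈ Icc 0 1 ∧ q.2 ∈ Icc 0 (1 - q.1)}) =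
        (Icc 0 1).indicator (fun x => ENNReal.ofReal (1 - x)) x := by
    by_cases hx : x ∈ Icc (0 : ℝ) 1
    · simp only [preimage_ofPred_eq, hx, true_and, ofPred_mem_eq, Real.volume_Icc, sub_zero,
        indicator_of_mem]
    · simp only [preimage_ofPred_eq, hx, false_and, ofPred_false, measure_empty, not_false_eq_true,
        indicator_of_notMem]
  have hmeas : MeasurableSet (convexHull ℝ {(0 : ℝ × ℝ), (1, 0), (0, 1)}) :=
    ((toFinite _).isClosed_convexHull ℝ).measurableSet
  rw [Measure.volume_eq_prod, Measure.prod_apply hmeas, hT, funext hslice,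
    lintegral_indicator measurableSet_Icc, ← ofReal_integral_eq_lintegral_ofReal,
    integral_Icc_eq_integral_Ioc, ← intervalIntegral.integral_of_le zero_le_one,
    intervalIntegral.integral_comp_sub_left (fun x => x)]
  · norm_num
  · exact (continuous_const.sub continuous_id).integrableOn_Icc
  · exact (ae_restrict_iff' measurableSet_Icc).2 (.of_forall fun x hx => sub_nonneg.2 hx.2)

theorem volume_convexHull_zero_pair (u v : ℝ × ℝ) :
    volume (convexHull ℝ {0, u, v}) = ENNReal.ofReal (|u.1 * v.2 - u.2 * v.1| / 2) := by
  set L := Matrix.toLin (Module.Basis.finTwoProd ℝ) (Module.Basis.finTwoProd ℝ)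
    !![u.1, v.1; u.2, v.2]
  have hL : L '' {0, (1, 0), (0, 1)} = {0, u, v} := by
    simp [L, image_insert_eq, Matrix.toLin_finTwoProd_apply, Prod.zero_eq_mk]
  have hdet : LinearMap.det L = u.1 * v.2 - u.2 * v.1 := by
    rw [LinearMap.det_toLin, Matrix.det_fin_two_of]
    ring
  rw [← hL, ← LinearMap.image_convexHull, Measure.addHaar_image_linearMap, hdet,
    volume_convexHull_zero_basis, ← ENNReal.ofReal_mul (abs_nonneg _), mul_one_div]

noncomputable def triangleLatticePoints (c d e f : ℤ) (n : ℕ) : Finset (ℤ × ℤ) :=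
  insert (e, f) ((Finset.Icc 0 (n : ℤ)).image fun m => (m * c, m * d))

section UnimodularTriangle

variable {c d e f : ℤ}

theorem volume_convexHull_unimodularTriangle (hdet : c * f - d * e = 1) (n : ℕ) :
    volume (convexHull ℝ {0, ((c : ℝ) * n, (d : ℝ) * n), ((e : ℝ), (f : ℝ))}) =
      ENNReal.ofReal (n / 2) := by
  have hR : (c : ℝ) * f - d * e = 1 := by exact_mod_cast hdet
  rw [volume_convexHull_zero_pair,
    show (c : ℝ) * n * f - d * n * e = n by linear_combination (n : ℝ) * hR,
    abs_of_nonneg n.cast_nonneg]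

theorem mem_triangleLatticePoints_of_mem_convexHull (hdet : c * f - d * e = 1) (n : ℕ)
    {z : ℤ × ℤ} (hz : ((z.1 : ℝ), (z.2 : ℝ)) ∈
      convexHull ℝ {0, ((c : ℝ) * n, (d : ℝ) * n), ((e : ℝ), (f : ℝ))}) :
    z ∈ triangleLatticePoints c d e f n := by
  obtain ⟨a, b, ha, hb, hab, hq⟩ := mem_convexHull_zero_pair_iff.1 hz
  simp only [Prod.smul_mk, smul_eq_mul, Prod.mk_add_mk, Prod.mk.injEq] at hq
  have hR : (c : ℝ) * f - d * e = 1 := by exact_mod_cast hdet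
  -- Cramer's rule: the coordinates of `z` in the basis `(c, d), (e, f)` are integers.
  obtain ⟨s, t, hs, ht, hz1, hz2⟩ : ∃ s t : ℤ, (s : ℝ) = a * n ∧ (t : ℝ) = b ∧
      z.1 = s * c + t * e ∧ z.2 = s * d + t * f :=
    ⟨f * z.1 - e * z.2, c * z.2 - d * z.1,
      by push_cast; rw [hq.1, hq.2]; linear_combination a * n * hR,
      by push_cast; rw [hq.1, hq.2]; linear_combination b * hR,
      by linear_combination (-z.1) * hdet, by linear_combination (-z.2) * hdet⟩
  have ht01 : t = 0 ∨ t = 1 := by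
    have h0 : 0 ≤ t := by exact_mod_cast ht ▸ hb
    have h1 : t ≤ 1 := by exact_mod_cast (ht ▸ (by linarith : b ≤ 1))
    omega
  simp only [triangleLatticePoints, Finset.mem_insert, Finset.mem_image, Finset.mem_Icc,
    Prod.ext_iff]
  rcases ht01 with rfl | rfl
  · refine Or.inr ⟨s, ⟨?_, ?_⟩, by simp [hz1], by simp [hz2]⟩
    · exact_mod_cast (hs ▸ (by positivity : 0 ≤ a * n))
    · exact_mod_cast (hs ▸ (by push_cast at ht; nlinarith : a * n ≤ n))
  · have hs0 : s = 0 := by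
      have ha0 : a = 0 := by push_cast at ht; linarith
      exact_mod_cast (hs.trans (by rw [ha0, zero_mul]) : (s : ℝ) = 0)
    exact Or.inl ⟨by simp [hz1, hs0], by simp [hz2, hs0]⟩

theorem cast_mem_triangleBoundary_of_mem (n : ℕ) {z : ℤ × ℤ}
    (hz : z ∈ triangleLatticePoints c d e f n) :
    ((z.1 : ℝ), (z.2 : ℝ)) ∈
      triangleBoundary 0 ((c : ℝ) * n, (d : ℝ) * n) ((e : ℝ), (f : ℝ)) := by
  simp only [triangleLatticePoints, Finset.mem_insert, Finset.mem_image, Finset.mem_Icc] at hz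
  rcases hz with rfl | ⟨m, ⟨hm0, hmn⟩, rfl⟩
  · exact Or.inl (Or.inr (right_mem_segment ℝ _ _))
  · refine Or.inl (Or.inl ?_)
    have := smul_mem_segment_zero_smul ((c : ℝ), (d : ℝ)) (by exact_mod_cast hm0)
      (by exact_mod_cast hmn : (m : ℝ) ≤ n)
    simpa [mul_comm] using this

theorem card_triangleLatticePoints (hdet : c * f - d * e = 1) (n : ℕ) :
    (triangleLatticePoints c d e f n).card = n + 2 := by
  have hapex : (e, f) ∉ (Finset.Icc 0 (n : ℤ)).image fun m => (m * c, m * d) := by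
    simp only [Finset.mem_image, Prod.mk.injEq, not_exists, not_and]
    rintro m - rfl rfl
    linarith [hdet, show m * c * (m * d) - m * d * (m * c) = 0 by ring]
  have hinj : Function.Injective fun m : ℤ => (m * c, m * d) := by
    intro m m' h
    simp only [Prod.mk.injEq] at h
    linear_combination f * h.1 - e * h.2 + (m' - m) * hdet
  rw [triangleLatticePoints, Finset.card_insert_of_notMem hapex,
    Finset.card_image_of_injective _ hinj, Int.card_Icc]
  omega

theorem latticePoints_unimodularTriangle (hdet : c * f - d * e = 1) (n : ℕ) :
    let B : ℝ × ℝ := ((c : ℝ) * n, (d : ℝ) * n)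
    let C : ℝ × ℝ := ((e : ℝ), (f : ℝ))
    volume (convexHull ℝ {0, B, C}) = ENNReal.ofReal (n / 2) ∧
      {z : ℤ × ℤ | ((z.1 : ℝ), (z.2 : ℝ)) ∈ triangleBoundary 0 B C}.ncard = n + 2 ∧
      {z : ℤ × ℤ | ((z.1 : ℝ), (z.2 : ℝ)) ∈ convexHull ℝ {0, B, C} ∧
        ((z.1 : ℝ), (z.2 : ℝ)) ∉ triangleBoundary 0 B C} = ∅ := by
  intro B C
  have hbd : {z : ℤ × ℤ | ((z.1 : ℝ), (z.2 : ℝ)) ∈ triangleBoundary 0 B C} =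
      triangleLatticePoints c d e f n :=
    Set.Subset.antisymm
      (fun z hz => mem_triangleLatticePoints_of_mem_convexHull hdet n
        (triangleBoundary_subset_convexHull _ _ _ hz))
      (fun z hz => cast_mem_triangleBoundary_of_mem n hz)
  refine ⟨volume_convexHull_unimodularTriangle hdet n, ?_, ?_⟩
  · rw [hbd, ncard_coe_finset, card_triangleLatticePoints hdet]
  · refine eq_empty_of_forall_notMem fun z ⟨hz, hzbd⟩ => hzbd ?_
    exact cast_mem_triangleBoundary_of_mem n
      (mem_triangleLatticePoints_of_mem_convexHull hdet n hz)

end UnimodularTriangle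

theorem stmt_15_general (p r c d k : ℕ) (hdet : c * r = d * p + 1) :
    let A : ℝ × ℝ := (0, 0)
    let B : ℝ × ℝ := ((c : ℝ) * (k + 1), (d : ℝ) * (k + 1))
    let C : ℝ × ℝ := ((p : ℝ) + c * k, (r : ℝ) + d * k)
    let boundary : Set (ℝ × ℝ) :=
      segment ℝ A B ∪ segment ℝ B C ∪ segment ℝ C A
    volume (convexHull ℝ {A, B, C}) = ENNReal.ofReal (((k : ℝ) + 1) / 2) ∧
      {z : ℤ × ℤ | ((z.1 : ℝ), (z.2 : ℝ)) ∈ boundary}.ncard = k + 3 ∧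
      {z : ℤ × ℤ | ((z.1 : ℝ), (z.2 : ℝ)) ∈ convexHull ℝ {A, B, C} ∧
        ((z.1 : ℝ), (z.2 : ℝ)) ∉ boundary} = ∅ := by
  have hdetZ : (c : ℤ) * (r + d * k) - d * (p + c * k) = 1 := by
    linear_combination (by exact_mod_cast hdet : (c : ℤ) * r = d * p + 1)
  have h := latticePoints_unimodularTriangle hdetZ (k + 1)
  push_cast [triangleBoundary] at h ⊢
  exact h

/-- Let `p, r, c, d, k` be positive integers with `cr - dp = 1`. The triangle
with vertices `A = (0,0)`, `B = (c(k+1), d(k+1))`, `C = (p+ck, r+dk)` has area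
`(k+1)/2`, has exactly `k+3` lattice points on its boundary, and contains no
lattice point in its interior. -/
theorem stmt_15 (p r c d k : ℕ) (hp : 0 < p) (hr : 0 < r) (hc : 0 < c)
    (hd : 0 < d) (hk : 0 < k) (hdet : c * r = d * p + 1) :
    let A : ℝ × ℝ := (0, 0)
    let B : ℝ × ℝ := ((c : ℝ) * (k + 1), (d : ℝ) * (k + 1))
    let C : ℝ × ℝ := ((p : ℝ) + c * k, (r : ℝ) + d * k)
    let boundary : Set (ℝ × ℝ) :=
      segment ℝ A B ∪ segment ℝ B C ∪ segment ℝ C A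
    volume (convexHull ℝ {A, B, C}) = ENNReal.ofReal (((k : ℝ) + 1) / 2) ∧
      {z : ℤ × ℤ | ((z.1 : ℝ), (z.2 : ℝ)) ∈ boundary}.ncard = k + 3 ∧
      {z : ℤ × ℤ | ((z.1 : ℝ), (z.2 : ℝ)) ∈ convexHull ℝ {A, B, C} ∧
        ((z.1 : ℝ), (z.2 : ℝ)) ∉ boundary} = ∅ :=
  stmt_15_general p r c d k hdet
end

section
/- For q ∈ ℝ⁺ let ρ_q ∈ (0,1) be the unique solution of Σ_{i=0}^∞ x^{1+i+⌊i/q⌋} = 1, and set Φ(q) = 1/ρ_q. Then Φ is strictly increasing on (0,∞), satisfies 1 < Φ(q) < 2 for all q > 0, Φ(q) → 1 as q → 0⁺, and Φ(q) → 2 as q → ∞. -/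
/-!
Write `S_q(x) = ∑ x^(1+i+⌊i/q⌋)`, so that `S_q(ρ_q) = 1`. The series is increasing in `x` and,
since the floors shrink as `q` grows, strictly increasing in `q`; hence `ρ_q` strictly decreases.
Comparison with `∑ x^(1+i) = x/(1-x)` gives `ρ_q > 1/2`. For `kq ≤ 1` the exponents are at least
`1 + (k+1)i`, which forces `1 ≤ ρ_q + ρ_q^(k+1)` and so `ρ_q → 1` as `q → 0⁺`; for `q ≥ n` the
first `n` floors vanish, so `∑_{i<n} ρ_q^(1+i) ≤ 1`, which forces `ρ_q → 1/2` as `q → ∞`.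
-/

open Filter Set Topology

section PowerSeries

variable {x : ℝ}

lemma summable_pow_of_le (hx0 : 0 ≤ x) (hx1 : x < 1) {e : ℕ → ℕ} (he : ∀ i, i ≤ e i) :
    Summable fun i => x ^ e i :=
  (summable_geometric_of_lt_one hx0 hx1).of_nonneg_of_le (fun _ => pow_nonneg hx0 _)
    fun i => pow_le_pow_of_le_one hx0 hx1.le (he i)

lemma tsum_pow_le_tsum_pow_of_le (hx0 : 0 ≤ x) (hx1 : x < 1) {e e' : ℕ → ℕ}
    (he : ∀ i, i ≤ e i) (hee' : ∀ i, e i ≤ e' i) :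
    ∑' i, x ^ e' i ≤ ∑' i, x ^ e i :=
  (summable_pow_of_le hx0 hx1 fun i => (he i).trans (hee' i)).tsum_le_tsum
    (fun i => pow_le_pow_of_le_one hx0 hx1.le (hee' i)) (summable_pow_of_le hx0 hx1 he)

lemma tsum_pow_lt_tsum_pow_of_le_of_lt (hx0 : 0 < x) (hx1 : x < 1) {e e' : ℕ → ℕ}
    (he : ∀ i, i ≤ e i) (hee' : ∀ i, e i ≤ e' i) {j : ℕ} (hj : e j < e' j) :
    ∑' i, x ^ e' i < ∑' i, x ^ e i :=
  Summable.tsum_lt_tsum_of_nonneg (fun _ => pow_nonneg hx0.le _)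
    (fun i => pow_le_pow_of_le_one hx0.le hx1.le (hee' i))
    (pow_lt_pow_right_of_lt_one₀ hx0 hx1 hj) (summable_pow_of_le hx0.le hx1 he)

lemma tsum_pow_one_add_mul (hx0 : 0 ≤ x) (hx1 : x < 1) {k : ℕ} (hk : k ≠ 0) :
    ∑' i : ℕ, x ^ (1 + k * i) = x / (1 - x ^ k) := by
  have hxk : x ^ k < 1 := pow_lt_one₀ hx0 hx1 hk
  simp only [pow_add, pow_one, pow_mul]
  rw [tsum_mul_left, tsum_geometric_of_lt_one (pow_nonneg hx0 k) hxk, div_eq_mul_inv]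

lemma exists_one_lt_sum_range_pow (hx : 1 / 2 < x) (hx1 : x < 1) :
    ∃ n : ℕ, 1 < ∑ i ∈ Finset.range n, x ^ (1 + i) := by
  have hsum : HasSum (fun i : ℕ => x ^ (1 + i)) (x / (1 - x)) := by
    simpa only [pow_add, pow_one, div_eq_mul_inv] using
      (hasSum_geometric_of_lt_one (by linarith) hx1).mul_left x
  have hlim : 1 < x / (1 - x) := by rw [lt_div_iff₀ (by linarith)]; linarith
  exact (hsum.tendsto_sum_nat.eventually (lt_mem_nhds hlim)).exists

end PowerSeries

noncomputable def floorPowSum (q x : ℝ) : ℝ :=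
  ∑' i : ℕ, x ^ (1 + i + ⌊(i : ℝ) / q⌋₊)

section FloorPowSum

variable {q x : ℝ}

lemma floorPowSum_le_floorPowSum {y : ℝ} (hx0 : 0 ≤ x) (hxy : x ≤ y) (hy1 : y < 1) :
    floorPowSum q x ≤ floorPowSum q y :=
  (summable_pow_of_le hx0 (hxy.trans_lt hy1) fun _ => by omega).tsum_le_tsum
    (fun _ => pow_le_pow_left₀ hx0 hxy _) (summable_pow_of_le (hx0.trans hxy) hy1 fun _ => by omega)

lemma floorPowSum_lt_floorPowSum_of_lt {q' : ℝ} (hq : 0 < q) (hqq' : q < q') (hx0 : 0 < x)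
    (hx1 : x < 1) : floorPowSum q x < floorPowSum q' x := by
  have hq' : 0 < q' := hq.trans hqq'
  have hfloor : ∀ i : ℕ, ⌊(i : ℝ) / q'⌋₊ ≤ ⌊(i : ℝ) / q⌋₊ := fun i =>
    Nat.floor_le_floor (div_le_div_of_nonneg_left i.cast_nonneg hq hqq'.le)
  -- at `j ≥ q q' / (q' - q)` the two quotients `j/q` and `j/q'` differ by at least `1`
  set j : ℕ := ⌈q * q' / (q' - q)⌉₊
  have hgap : (j : ℝ) / q' + 1 ≤ j / q := by
    have hj : q * q' ≤ j * (q' - q) := by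
      rw [← div_le_iff₀ (by linarith)]; exact Nat.le_ceil _
    rw [div_add_one hq'.ne', div_le_div_iff₀ hq' hq]
    nlinarith
  have hj : ⌊(j : ℝ) / q'⌋₊ < ⌊(j : ℝ) / q⌋₊ := by
    rw [Nat.lt_iff_add_one_le, Nat.le_floor_iff (by positivity)]
    push_cast
    linarith [Nat.floor_le (show (0 : ℝ) ≤ j / q' by positivity)]
  exact tsum_pow_lt_tsum_pow_of_le_of_lt hx0 hx1 (fun _ => by omega)
    (fun i => by have := hfloor i; omega) (j := j) (by omega)

lemma floorPowSum_lt_div (hq : 0 < q) (hx0 : 0 < x) (hx1 : x < 1) :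
    floorPowSum q x < x / (1 - x) := by
  have hfloor : 1 ≤ ⌊(⌈q⌉₊ : ℝ) / q⌋₊ :=
    Nat.le_floor (by rw [Nat.cast_one, le_div_iff₀ hq, one_mul]; exact Nat.le_ceil q)
  have hgeom := tsum_pow_one_add_mul hx0.le hx1 one_ne_zero
  rw [pow_one] at hgeom
  rw [← hgeom]
  exact tsum_pow_lt_tsum_pow_of_le_of_lt hx0 hx1 (fun _ => by omega) (fun _ => by omega)
    (j := ⌈q⌉₊) (by omega)

lemma floorPowSum_le_div_of_mul_le_one {k : ℕ} (hq : 0 < q) (hkq : k * q ≤ 1) (hx0 : 0 ≤ x)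
    (hx1 : x < 1) : floorPowSum q x ≤ x / (1 - x ^ (k + 1)) := by
  have hfloor : ∀ i : ℕ, k * i ≤ ⌊(i : ℝ) / q⌋₊ := fun i =>
    Nat.le_floor <| by
      rw [le_div_iff₀ hq]; push_cast
      nlinarith [i.cast_nonneg (α := ℝ)]
  rw [← tsum_pow_one_add_mul hx0 hx1 k.succ_ne_zero]
  exact tsum_pow_le_tsum_pow_of_le hx0 hx1 (fun _ => by nlinarith)
    (fun i => by have := hfloor i; nlinarith)

lemma sum_range_pow_le_floorPowSum {n : ℕ} (hq : 0 < q) (hnq : n ≤ q) (hx0 : 0 ≤ x)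
    (hx1 : x < 1) : ∑ i ∈ Finset.range n, x ^ (1 + i) ≤ floorPowSum q x := by
  have hfloor : ∀ i ∈ Finset.range n, ⌊(i : ℝ) / q⌋₊ = 0 := fun i hi =>
    Nat.floor_eq_zero.mpr <| (div_lt_one hq).mpr <|
      (Nat.cast_lt.mpr (Finset.mem_range.mp hi)).trans_le hnq
  calc ∑ i ∈ Finset.range n, x ^ (1 + i)
      = ∑ i ∈ Finset.range n, x ^ (1 + i + ⌊(i : ℝ) / q⌋₊) :=
        Finset.sum_congr rfl fun i hi => by rw [hfloor i hi, add_zero]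
    _ ≤ floorPowSum q x :=
        (summable_pow_of_le hx0 hx1 fun _ => by omega).sum_le_tsum _
          fun _ _ => pow_nonneg hx0 _

end FloorPowSum

section Root

variable (ρ : ℝ → ℝ) (hρ : ∀ q : ℝ, 0 < q → ρ q ∈ Ioo (0 : ℝ) 1 ∧ floorPowSum q (ρ q) = 1)
include hρ

lemma half_lt_root {q : ℝ} (hq : 0 < q) : 1 / 2 < ρ q := by
  obtain ⟨⟨h0, h1⟩, hS⟩ := hρ q hq
  have := floorPowSum_lt_div hq h0 h1
  rw [hS, lt_div_iff₀ (by linarith)] at this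
  linarith

lemma strictAntiOn_root : StrictAntiOn ρ (Ioi 0) := by
  intro q hq q' hq' hqq'
  obtain ⟨⟨h0, -⟩, hS⟩ := hρ q hq
  obtain ⟨⟨h0', h1'⟩, hS'⟩ := hρ q' hq'
  by_contra! hle
  have := (floorPowSum_le_floorPowSum h0.le hle h1').trans_lt
    (floorPowSum_lt_floorPowSum_of_lt hq hqq' h0' h1')
  rw [hS, hS'] at this
  exact this.false

lemma tendsto_root_nhdsGT_zero : Tendsto ρ (𝓝[>] 0) (𝓝 1) := by
  refine tendsto_order.2 ⟨fun b hb => ?_, fun b hb => ?_⟩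
  · obtain ⟨c, hbc, hc0, hc1⟩ : ∃ c, b ≤ c ∧ 0 ≤ c ∧ c < 1 :=
      ⟨max b 0, le_max_left _ _, le_max_right _ _, max_lt hb one_pos⟩
    obtain ⟨k, hk⟩ := exists_pow_lt_of_lt_one (sub_pos.mpr hc1) hc1
    have hsmall : ∀ᶠ q in 𝓝[>] 0, (k : ℝ) * q < 1 :=
      nhdsWithin_le_nhds <| ((continuous_const_mul (k : ℝ)).tendsto' 0 0 (mul_zero _)).eventually
        (gt_mem_nhds one_pos)
    filter_upwards [(self_mem_nhdsWithin : Ioi (0 : ℝ) ∈ 𝓝[>] 0), hsmall] with q (hq : 0 < q) hkq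
    obtain ⟨⟨h0, h1⟩, hS⟩ := hρ q hq
    refine hbc.trans_lt (lt_of_not_ge fun hle => ?_)
    have := floorPowSum_le_div_of_mul_le_one hq hkq.le h0.le h1
    rw [hS, le_div_iff₀ (sub_pos.mpr (pow_lt_one₀ h0.le h1 k.add_one_ne_zero))] at this
    have : ρ q ^ (k + 1) ≤ c ^ k :=
      (pow_le_pow_left₀ h0.le hle _).trans (pow_le_pow_of_le_one hc0 hc1.le k.le_succ)
    linarith
  · filter_upwards [(self_mem_nhdsWithin : Ioi (0 : ℝ) ∈ 𝓝[>] 0)] with q (hq : 0 < q)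
    exact (hρ q hq).1.2.trans hb

lemma tendsto_root_atTop : Tendsto ρ atTop (𝓝 (1 / 2)) := by
  refine tendsto_order.2 ⟨fun b hb => ?_, fun b hb => ?_⟩
  · filter_upwards [eventually_gt_atTop 0] with q hq
    exact hb.trans (half_lt_root ρ hρ hq)
  · obtain ⟨c, hcb, hc, hc1⟩ : ∃ c, c ≤ b ∧ 1 / 2 < c ∧ c < 1 :=
      ⟨min b (3 / 4), min_le_left _ _, lt_min hb (by norm_num), by norm_num⟩
    obtain ⟨n, hn⟩ := exists_one_lt_sum_range_pow hc hc1
    filter_upwards [eventually_ge_atTop (max (n : ℝ) 1)] with q hq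
    have hq0 : 0 < q := one_pos.trans_le ((le_max_right _ _).trans hq)
    obtain ⟨⟨h0, h1⟩, hS⟩ := hρ q hq0
    refine (lt_of_not_ge fun hle => ?_).trans_le hcb
    have := sum_range_pow_le_floorPowSum hq0 ((le_max_left _ _).trans hq) h0.le h1
    have := Finset.sum_le_sum fun i (_ : i ∈ Finset.range n) =>
      pow_le_pow_left₀ (by linarith : (0 : ℝ) ≤ c) hle (1 + i)
    linarith

end Root

/-- For `q > 0` let `ρ q ∈ (0,1)` be the unique solution of
`∑_{i=0}^∞ x^(1+i+⌊i/q⌋) = 1` and set `Φ(q) = 1/ρ q`. Then `Φ` is strictly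
increasing on `(0,∞)`, satisfies `1 < Φ(q) < 2` for all `q > 0`,
`Φ(q) → 1` as `q → 0⁺`, and `Φ(q) → 2` as `q → ∞`. -/
theorem stmt_17 (ρ : ℝ → ℝ)
    (hρ : ∀ q : ℝ, 0 < q → ρ q ∈ Set.Ioo (0:ℝ) 1 ∧
      (∑' i : ℕ, ρ q ^ (1 + i + ⌊(i : ℝ) / q⌋₊)) = 1) :
    StrictMonoOn (fun q => 1 / ρ q) (Set.Ioi (0:ℝ)) ∧
      (∀ q : ℝ, 0 < q → 1 < 1 / ρ q ∧ 1 / ρ q < 2) ∧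
      Tendsto (fun q => 1 / ρ q) (nhdsWithin 0 (Set.Ioi (0:ℝ))) (nhds 1) ∧
      Tendsto (fun q => 1 / ρ q) atTop (nhds 2) := by
  have hpos : ∀ q : ℝ, 0 < q → 0 < ρ q := fun q hq => (hρ q hq).1.1
  refine ⟨fun q hq q' hq' hqq' => one_div_lt_one_div_of_lt (hpos q' hq')
      (strictAntiOn_root ρ hρ hq hq' hqq'), fun q hq => ⟨?_, ?_⟩, ?_, ?_⟩
  · exact one_lt_one_div (hpos q hq) (hρ q hq).1.2
  · rw [div_lt_iff₀ (hpos q hq)]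
    linarith [half_lt_root ρ hρ hq]
  · simpa using (tendsto_root_nhdsGT_zero ρ hρ).inv₀ one_ne_zero
  · simpa using (tendsto_root_atTop ρ hρ).inv₀ (by norm_num)
end

section
/- Let q = c/d be an irreducible positive fraction and define Π_q(x) = 1 − x^{c+d} − Σ_{i=0}^{c-1} x^{1+i+⌊i·d/c⌋} and Π_q⁺(x) = 1 − (2−x)x^{c+d} − Σ_{i=0}^{c-1} x^{1+i+⌊i·d/c⌋}. Let ρ_q and ρ_q⁺ be their respective roots of smallest modulus. Then both ρ_q and ρ_q⁺ are real, lie in (0,1), and ρ_q⁺ < ρ_q. -/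
/-!
Dividing by `1 - x` turns `Π_q` and `Π_q⁺` into `1 - F`, where `F` is a power series with
non-negative coefficients all equal to `c` from degree `c + d` on. On `|x| < 1` one then has
`|F(x)| ≤ F(|x|)`, and `F` is strictly increasing on `[0, 1)`; so a root `x` with `|x| ≤ ρ`,
`ρ` the positive real root, forces `|x| = ρ` and equality in `|1 - x| ≥ 1 - |x|`, i.e. `x = ρ`.
Since `F⁺ = F + x^(c+d)`, the positive root of `1 - F⁺` lies to the left of that of `1 - F`.
-/

open Finset

section PowSumWithTail

variable {ι : Type*} (s : Finset ι) (m : ι → ℕ) (K M : ℕ)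

/-- Closed form of the power series `∑_{j ∈ s} x ^ m j + K ∑_{n ≥ M} x ^ n`
(a junk value at `x = 1`). -/
def powSumWithTail {𝕜 : Type*} [Field 𝕜] (x : 𝕜) : 𝕜 :=
  ∑ j ∈ s, x ^ m j + K * x ^ M / (1 - x)

theorem powSumWithTail_ofReal (x : ℝ) :
    powSumWithTail s m K M (x : ℂ) = powSumWithTail s m K M x := by
  simp [powSumWithTail]

theorem powSumWithTail_insert [DecidableEq ι] {𝕜 : Type*} [Field 𝕜] {j : ι} (hj : j ∉ s)
    (x : 𝕜) :
    powSumWithTail (insert j s) m K M x = x ^ m j + powSumWithTail s m K M x := by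
  rw [powSumWithTail, powSumWithTail, sum_insert hj, add_assoc]

theorem one_sub_mul_one_sub_powSumWithTail {𝕜 : Type*} [Field 𝕜] {x : 𝕜} (hx : x ≠ 1) :
    (1 - x) * (1 - powSumWithTail s m K M x)
      = (1 - x) * (1 - ∑ j ∈ s, x ^ m j) - K * x ^ M := by
  have : 1 - x ≠ 0 := sub_ne_zero.2 hx.symm
  rw [powSumWithTail]
  field_simp
  ring

theorem powSumWithTail_strictMonoOn (hK : 0 < K) :
    StrictMonoOn (powSumWithTail s m K M : ℝ → ℝ) (Set.Ico 0 1) := by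
  intro x ⟨hx0, _⟩ y ⟨_, hy1⟩ hxy
  have hy : 0 < y := hx0.trans_lt hxy
  have hsum : ∑ j ∈ s, x ^ m j ≤ ∑ j ∈ s, y ^ m j := by gcongr
  have htail : K * x ^ M / (1 - x) < K * y ^ M / (1 - y) := by
    calc K * x ^ M / (1 - x) ≤ K * y ^ M / (1 - x) := by gcongr
      _ < K * y ^ M / (1 - y) := by gcongr
  exact add_lt_add_of_le_of_lt hsum htail

theorem Complex.eq_norm_of_norm_one_sub_le {z : ℂ} (h : ‖1 - z‖ ≤ 1 - ‖z‖) :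
    z = ‖z‖ := by
  have hre : 1 - z.re ≤ ‖1 - z‖ := by simpa using Complex.re_le_norm (1 - z)
  have hz : z.re = ‖z‖ := le_antisymm (Complex.re_le_norm z) (by linarith)
  have him : z.im = 0 := Complex.abs_re_eq_norm.1 (by rw [hz, abs_norm])
  exact Complex.ext (by simp [hz]) (by simp [him])

theorem eq_of_powSumWithTail_eq_one (hK : 0 < K) {r : ℝ} (hr0 : 0 < r) (hr1 : r < 1)
    (hr : powSumWithTail s m K M r = 1) {z : ℂ} (hz : powSumWithTail s m K M z = 1)
    (hzr : ‖z‖ ≤ r) : z = r := by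
  have hz1 : ‖z‖ < 1 := hzr.trans_lt hr1
  have h1z : 1 - ‖z‖ ≤ ‖1 - z‖ := by simpa using norm_sub_norm_le (1 : ℂ) z
  have hbound : 1 ≤ ∑ j ∈ s, ‖z‖ ^ m j + K * ‖z‖ ^ M / ‖1 - z‖ :=
    calc 1 = ‖powSumWithTail s m K M z‖ := by rw [hz, norm_one]
      _ ≤ ‖∑ j ∈ s, z ^ m j‖ + ‖(K : ℂ) * z ^ M / (1 - z)‖ := norm_add_le _ _
      _ ≤ _ := by
        rw [norm_div, norm_mul, norm_pow, Complex.norm_natCast]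
        gcongr
        exact (norm_sum_le _ _).trans_eq (by simp [norm_pow])
  have hnorm : ‖z‖ = r := by
    refine le_antisymm hzr ?_
    rw [← (powSumWithTail_strictMonoOn s m K M hK).le_iff_le ⟨hr0.le, hr1⟩
      ⟨norm_nonneg z, hz1⟩, hr, powSumWithTail]
    calc 1 ≤ _ := hbound
      _ ≤ _ := by gcongr
  rw [hnorm] at hbound h1z
  have h1z' : ‖1 - z‖ ≤ 1 - r := by
    rw [powSumWithTail] at hr
    have : K * r ^ M / (1 - r) ≤ K * r ^ M / ‖1 - z‖ := by linarith
    exact (div_le_div_iff_of_pos_left (by positivity) (by linarith) (by linarith)).1 this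
  have := Complex.eq_norm_of_norm_one_sub_le (z := z) (by rwa [hnorm])
  rwa [hnorm] at this

theorem exists_powSumWithTail_eq_one (hK : 0 < K) (hm : ∀ j ∈ s, 0 < m j) (hM : 0 < M) :
    ∃ r ∈ Set.Ioo (0 : ℝ) 1, powSumWithTail s m K M r = 1 := by
  let g : ℝ → ℝ := fun x ↦ (1 - x) * (1 - ∑ j ∈ s, x ^ m j) - K * x ^ M
  have hg : ContinuousOn g (Set.Icc 0 1) := by fun_prop
  have hg0 : g 0 = 1 := by
    have : ∑ j ∈ s, (0 : ℝ) ^ m j = 0 := sum_eq_zero fun j hj ↦ zero_pow (hm j hj).ne'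
    simp [g, this, zero_pow hM.ne']
  have hg1 : g 1 = -K := by simp [g]
  obtain ⟨r, hr, hgr⟩ := intermediate_value_Ioo' zero_le_one hg
    (show (0 : ℝ) ∈ Set.Ioo (g 1) (g 0) by simp [hg0, hg1, hK])
  refine ⟨r, hr, ?_⟩
  have h : (1 - r) * (1 - powSumWithTail s m K M r) = 0 :=
    (one_sub_mul_one_sub_powSumWithTail s m K M hr.2.ne).trans hgr
  linarith [(mul_eq_zero.1 h).resolve_left (by linarith [hr.2])]

theorem exists_eq_ofReal_of_forall_norm_le (hK : 0 < K) (hm : ∀ j ∈ s, 0 < m j) (hM : 0 < M)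
    {P : ℂ → ℂ} (hP : ∀ x, x ≠ 1 → P x = (1 - x) * (1 - powSumWithTail s m K M x))
    (hP1 : P 1 ≠ 0) {z : ℂ} (hz : P z = 0) (hmin : ∀ x, P x = 0 → ‖z‖ ≤ ‖x‖) :
    ∃ r ∈ Set.Ioo (0 : ℝ) 1, z = r ∧ powSumWithTail s m K M r = 1 := by
  obtain ⟨r, hr, hFr⟩ := exists_powSumWithTail_eq_one s m K M hK hm hM
  have hz1 : z ≠ 1 := by rintro rfl; exact hP1 hz
  have hFz : powSumWithTail s m K M z = 1 := by
    rw [hP z hz1] at hz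
    have := (mul_eq_zero.1 hz).resolve_left (sub_ne_zero.2 (Ne.symm hz1))
    linear_combination -this
  have hzr : ‖z‖ ≤ r := by
    have hPr : P r = 0 := by
      rw [hP r (by exact_mod_cast hr.2.ne), powSumWithTail_ofReal, hFr]
      simp
    simpa [abs_of_pos hr.1] using hmin r hPr
  exact ⟨r, hr, eq_of_powSumWithTail_eq_one s m K M hK hr.1 hr.2 hFr hFz hzr, hFr⟩

end PowSumWithTail

section Pi

variable (c d : ℕ)

def piPoly {R : Type*} [CommRing R] (x : R) : R :=
  1 - x ^ (c + d) - ∑ i ∈ range c, x ^ (1 + i + i * d / c)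

def piPlusPoly {R : Type*} [CommRing R] (x : R) : R :=
  1 - (2 - x) * x ^ (c + d) - ∑ i ∈ range c, x ^ (1 + i + i * d / c)

def piExponents : Finset (Σ _ : ℕ, ℕ) :=
  (Ico 1 c).sigma fun i ↦ Ico (1 + i + i * d / c) (c + d)

def piPlusExponents : Finset (Σ _ : ℕ, ℕ) :=
  insert ⟨0, c + d⟩ (piExponents c d)

theorem snd_pos_of_mem_piPlusExponents (hc : 0 < c) {j : Σ _ : ℕ, ℕ}
    (hj : j ∈ piPlusExponents c d) : 0 < j.2 := by
  simp only [piPlusExponents, piExponents, mem_insert, mem_sigma, mem_Ico] at hj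
  rcases hj with rfl | hj
  · exact Nat.add_pos_left hc d
  · exact (by positivity : 0 < 1 + j.1 + j.1 * d / c).trans_le hj.2.1

theorem powSumWithTail_piPlusExponents {𝕜 : Type*} [Field 𝕜] (x : 𝕜) :
    powSumWithTail (piPlusExponents c d) Sigma.snd c (c + d) x
      = x ^ (c + d) + powSumWithTail (piExponents c d) Sigma.snd c (c + d) x :=
  powSumWithTail_insert _ _ _ _ (by simp [piExponents]) x

theorem piPoly_eq {𝕜 : Type*} [Field 𝕜] (hc : 0 < c) {x : 𝕜} (hx : x ≠ 1) :
    piPoly c d x = (1 - x) * (1 - powSumWithTail (piExponents c d) Sigma.snd c (c + d) x) := by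
  have htel : ∀ i ∈ Ico 1 c, x ^ (1 + i + i * d / c)
      = x ^ (c + d) + (1 - x) * ∑ n ∈ Ico (1 + i + i * d / c) (c + d), x ^ n := by
    intro i hi
    have hic : i < c := (mem_Ico.1 hi).2
    have hle : i * d / c ≤ d := Nat.div_le_of_le_mul (Nat.mul_le_mul_right d hic.le)
    linear_combination -geom_sum_Ico_mul_neg x (show 1 + i + i * d / c ≤ c + d by omega)
  rw [one_sub_mul_one_sub_powSumWithTail _ _ _ _ hx, piExponents, sum_sigma, piPoly,
    range_eq_Ico, sum_eq_sum_Ico_succ_bot hc, sum_congr rfl htel, sum_add_distrib, sum_const,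
    Nat.card_Ico, ← mul_sum]
  simp only [nsmul_eq_mul, Nat.cast_sub hc, zero_mul, Nat.zero_div, add_zero]
  push_cast
  ring

theorem piPlusPoly_eq {𝕜 : Type*} [Field 𝕜] (hc : 0 < c) {x : 𝕜} (hx : x ≠ 1) :
    piPlusPoly c d x
      = (1 - x) * (1 - powSumWithTail (piPlusExponents c d) Sigma.snd c (c + d) x) := by
  have h := piPoly_eq c d hc hx
  rw [piPoly] at h
  rw [piPlusPoly, powSumWithTail_piPlusExponents]
  linear_combination h

end Pi

theorem stmt_19_general (c d : ℕ) (hc : 0 < c)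
    (z z' : ℂ)
    (hz : 1 - z ^ (c + d) - ∑ i ∈ Finset.range c, z ^ (1 + i + i * d / c) = 0)
    (hzmin : ∀ w : ℂ,
      1 - w ^ (c + d) - ∑ i ∈ Finset.range c, w ^ (1 + i + i * d / c) = 0 →
      ‖z‖ ≤ ‖w‖)
    (hz' : 1 - (2 - z') * z' ^ (c + d) -
      ∑ i ∈ Finset.range c, z' ^ (1 + i + i * d / c) = 0)
    (hz'min : ∀ w : ℂ,
      1 - (2 - w) * w ^ (c + d) -
        ∑ i ∈ Finset.range c, w ^ (1 + i + i * d / c) = 0 →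
      ‖z'‖ ≤ ‖w‖) :
    ∃ x x' : ℝ, z = (x : ℂ) ∧ z' = (x' : ℂ) ∧
      x ∈ Set.Ioo (0:ℝ) 1 ∧ x' ∈ Set.Ioo (0:ℝ) 1 ∧ x' < x := by
  have hN : 0 < c + d := Nat.add_pos_left hc d
  have hm : ∀ j ∈ piPlusExponents c d, 0 < j.2 :=
    fun _ ↦ snd_pos_of_mem_piPlusExponents c d hc
  have hcC : (c : ℂ) ≠ 0 := Nat.cast_ne_zero.2 hc.ne'
  obtain ⟨x, hx, rfl, hFx⟩ := exists_eq_ofReal_of_forall_norm_le _ _ _ _ hc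
    (fun j hj ↦ hm j (mem_insert_of_mem hj)) hN (P := piPoly c d) (fun _ ↦ piPoly_eq c d hc)
    (by simpa [piPoly] using hcC) hz hzmin
  obtain ⟨x', hx', rfl, hFx'⟩ := exists_eq_ofReal_of_forall_norm_le _ _ _ _ hc hm hN
    (P := piPlusPoly c d) (fun _ ↦ piPlusPoly_eq c d hc)
    (by norm_num [piPlusPoly, hcC]) hz' hz'min
  refine ⟨x, x', rfl, rfl, hx, hx', ?_⟩
  rw [powSumWithTail_piPlusExponents] at hFx'
  refine ((powSumWithTail_strictMonoOn (piExponents c d) Sigma.snd c (c + d) hc).lt_iff_lt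
    ⟨hx'.1.le, hx'.2⟩ ⟨hx.1.le, hx.2⟩).1 ?_
  linarith [pow_pos hx'.1 (c + d)]

/-- Let `q = c/d` be an irreducible positive fraction and define
`Π_q(x) = 1 - x^(c+d) - ∑_{i=0}^{c-1} x^(1+i+⌊i·d/c⌋)` and
`Π_q⁺(x) = 1 - (2-x)·x^(c+d) - ∑_{i=0}^{c-1} x^(1+i+⌊i·d/c⌋)`.
If `z` and `z'` are roots of smallest modulus of `Π_q` and `Π_q⁺`
respectively (among complex roots), then both are real, lie in `(0,1)`,
and `z' < z`. (Here `i * d / c` is natural-number division, i.e. the floor.) -/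
theorem stmt_19 (c d : ℕ) (hc : 0 < c) (hd : 0 < d) (hcd : Nat.Coprime c d)
    (z z' : ℂ)
    (hz : 1 - z ^ (c + d) - ∑ i ∈ Finset.range c, z ^ (1 + i + i * d / c) = 0)
    (hzmin : ∀ w : ℂ,
      1 - w ^ (c + d) - ∑ i ∈ Finset.range c, w ^ (1 + i + i * d / c) = 0 →
      ‖z‖ ≤ ‖w‖)
    (hz' : 1 - (2 - z') * z' ^ (c + d) -
      ∑ i ∈ Finset.range c, z' ^ (1 + i + i * d / c) = 0)
    (hz'min : ∀ w : ℂ,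
      1 - (2 - w) * w ^ (c + d) -
        ∑ i ∈ Finset.range c, w ^ (1 + i + i * d / c) = 0 →
      ‖z'‖ ≤ ‖w‖) :
    ∃ x x' : ℝ, z = (x : ℂ) ∧ z' = (x' : ℂ) ∧
      x ∈ Set.Ioo (0:ℝ) 1 ∧ x' ∈ Set.Ioo (0:ℝ) 1 ∧ x' < x :=
  stmt_19_general c d hc z z' hz hzmin hz' hz'min
end
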